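/- arXiv:math/0607339 — 6 statements merged into one kernel-verified Lean document; each statement's English description precedes it below -/
import Mathlib

section
/- Let L be a lattice of signature (2,n), let w ∈ L⊗ℂ satisfy (w,w) = 0 and (w,w̄) > 0, and set S = {x ∈ L : (x,w) = 0 and (x,w̄) = 0} and T = {x ∈ L : (x,s) = 0 for all s ∈ S}. Then (S⊗ℂ) ∩ (T⊗ℂ) = {0} as subspaces of L⊗ℂ. -/
/-!
Write `w = a + i b` with `a, b` real. The conditions `(w,w) = 0` and `(w,w̄) > 0` say that `a` and
`b` are orthogonal of the same positive norm, so they span a positive definite plane `U`. By the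
signature `(2,n)` there is an `n`-dimensional negative definite subspace, which is then a complement
of `U`, and this forces the form to be negative definite on `U^⊥`. An element `v` of
`(S⊗ℂ) ∩ (T⊗ℂ)` is orthogonal to `w` and `w̄`, so `Re v` and `Im v` lie in `U^⊥`; as `v̄` is again
in `S⊗ℂ`, we get `0 = (v,v̄) = (Re v, Re v) + (Im v, Im v)`, whence `v = 0`.
-/

namespace A0607339

/-- Extension of scalars `ℤ → ℂ` for integer vectors. -/
def toC (ι : Type) [Fintype ι] : (ι → ℤ) →ₗ[ℤ] (ι → ℂ) where
  toFun v i := (v i : ℂ)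
  map_add' u v := by funext i; simp
  map_smul' c v := by funext i; simp

/-- The `ℤ`-valued bilinear form attached to a Gram matrix `G`. -/
def bZ {ι : Type} [Fintype ι] (G : Matrix ι ι ℤ) (x y : ι → ℤ) : ℤ :=
  dotProduct x (Matrix.mulVec G y)

/-- The `ℂ`-bilinear extension of the form attached to a Gram matrix `G`. -/
noncomputable def bC {ι : Type} [Fintype ι] (G : Matrix ι ι ℤ) (x y : ι → ℂ) : ℂ :=
  dotProduct x (Matrix.mulVec (G.map (Int.cast : ℤ → ℂ)) y)

/-- The Gram matrix `G` has `p` positive and `q` negative squares in a real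
diagonalization, i.e. the lattice has signature `(p,q)`. -/
def HasSignature {ι : Type} [Fintype ι] [DecidableEq ι] (G : Matrix ι ι ℤ) (p q : ℕ) : Prop :=
  ∃ (P : Matrix ι ι ℝ) (d : ι → ℝ), IsUnit P.det ∧
    Matrix.transpose P * G.map (Int.cast : ℤ → ℝ) * P = Matrix.diagonal d ∧
    Nat.card {i // 0 < d i} = p ∧ Nat.card {i // d i < 0} = q

open Module

section Orthogonal

variable {K E : Type*} [Field K] [LinearOrder K] [AddCommGroup E] [Module K E]
  {B : LinearMap.BilinForm K E} {U N : Submodule K E}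

lemma isCompl_of_posDef_of_negDef [FiniteDimensional K E]
    (hU : ∀ u ∈ U, u ≠ 0 → 0 < B u u) (hN : ∀ y ∈ N, y ≠ 0 → B y y < 0)
    (hdim : finrank K E ≤ finrank K U + finrank K N) : IsCompl U N := by
  refine (Submodule.isCompl_iff_disjoint U N hdim).mpr (Submodule.disjoint_def.mpr ?_)
  intro v hvU hvN
  by_contra hv
  exact (hN v hvN hv).not_gt (hU v hvU hv)

lemma apply_self_neg_of_mem_orthogonal [IsStrictOrderedRing K] (hB : B.IsSymm)
    (hUN : Codisjoint U N) (hU : ∀ u ∈ U, u ≠ 0 → 0 < B u u)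
    (hN : ∀ y ∈ N, y ≠ 0 → B y y < 0) {x : E} (hx : x ∈ B.orthogonal U) (hx0 : x ≠ 0) :
    B x x < 0 := by
  obtain ⟨u, hu, y, hy, rfl⟩ := Submodule.mem_sup.mp (hUN.eq_top ▸ Submodule.mem_top (x := x))
  have hux : B u (u + y) = 0 := hx u hu
  have hxu : B (u + y) u = 0 := by rw [hB.eq]; exact hux
  have hxx : B (u + y) (u + y) = B y y - B u u := by
    simp only [map_add, LinearMap.add_apply] at hux hxu ⊢
    linear_combination hux + hxu
  have hUu : 0 ≤ B u u := by
    rcases eq_or_ne u 0 with rfl | hu0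
    · simp
    · exact (hU u hu hu0).le
  have hNy : B y y ≤ 0 := by
    rcases eq_or_ne y 0 with rfl | hy0
    · simp
    · exact (hN y hy hy0).le
  rw [hxx]
  rcases eq_or_ne u 0 with rfl | hu0
  · linarith [hN y hy (by simpa using hx0)]
  · linarith [hU u hu hu0]

end Orthogonal

section Pair

variable {K E : Type*} [Field K] [AddCommGroup E] [Module K E] {B : LinearMap.BilinForm K E}
  {a b : E}

lemma apply_smul_add_smul_self (hab : B a b = 0) (hba : B b a = 0) (s t : K) :
    B (s • a + t • b) (s • a + t • b) = s ^ 2 * B a a + t ^ 2 * B b b := by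
  simp only [map_add, map_smul, LinearMap.add_apply, LinearMap.smul_apply, smul_eq_mul, hab, hba]
  ring

lemma posDef_span_pair [LinearOrder K] [IsStrictOrderedRing K] (hab : B a b = 0)
    (hba : B b a = 0) (ha : 0 < B a a) (hb : 0 < B b b) :
    ∀ u ∈ Submodule.span K {a, b}, u ≠ 0 → 0 < B u u := by
  rintro u hu hu0
  obtain ⟨s, t, rfl⟩ := Submodule.mem_span_pair.mp hu
  rw [apply_smul_add_smul_self hab hba]
  have hst : s ≠ 0 ∨ t ≠ 0 := by
    by_contra! h
    simp [h.1, h.2] at hu0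
  rcases hst with hs | ht
  · positivity
  · positivity

lemma finrank_span_pair (hab : B a b = 0) (hba : B b a = 0) (ha : B a a ≠ 0) (hb : B b b ≠ 0) :
    finrank K (Submodule.span K {a, b}) = 2 := by
  have hli : LinearIndependent K ![a, b] := by
    refine LinearIndependent.pair_iff.mpr fun s t hst => ⟨?_, ?_⟩
    · have := congrArg (B · a) hst
      simpa [hab, hba, ha] using this
    · have := congrArg (B · b) hst
      simpa [hab, hba, hb] using this
  rw [← Matrix.range_cons_cons_empty a b ![], finrank_span_eq_card hli, Fintype.card_fin]

end Pair

lemma LinearMap.apply_eq_zero_of_mem_span {R M N P : Type*} [CommSemiring R] [AddCommMonoid M]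
    [AddCommMonoid N] [AddCommMonoid P] [Module R M] [Module R N] [Module R P]
    (B : M →ₗ[R] N →ₗ[R] P) {X : Set M} {Y : Set N} (h : ∀ x ∈ X, ∀ y ∈ Y, B x y = 0)
    {x : M} {y : N} (hx : x ∈ Submodule.span R X) (hy : y ∈ Submodule.span R Y) : B x y = 0 := by
  have hxY : ∀ y ∈ Y, B x y = 0 := fun y' hy' =>
    LinearMap.eqOn_span (f := B.flip y') (g := 0) (fun x' hx' => h x' hx' y' hy') hx
  exact LinearMap.eqOn_span (f := B x) (g := 0) hxY hy

section Signature

open Matrix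

variable {ι : Type} [Fintype ι] [DecidableEq ι]

noncomputable def formR (G : Matrix ι ι ℤ) : LinearMap.BilinForm ℝ (ι → ℝ) :=
  Matrix.toBilin' (G.map (Int.cast : ℤ → ℝ))

lemma exists_negDef_diagonal (d : ι → ℝ) :
    ∃ N : Submodule ℝ (ι → ℝ), finrank ℝ N = Nat.card {i // d i < 0} ∧
      ∀ z ∈ N, z ≠ 0 → Matrix.toBilin' (Matrix.diagonal d) z z < 0 := by
  let ρ := LinearMap.funLeft ℝ ℝ (Subtype.val : {i // ¬ d i < 0} → ι)
  -- `ker ρ` consists of the vectors supported on `{i | d i < 0}`.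
  refine ⟨LinearMap.ker ρ, ?_, ?_⟩
  · have hρ : LinearMap.range ρ = ⊤ := LinearMap.range_eq_top.mpr
      (LinearMap.funLeft_surjective_of_injective _ _ _ Subtype.val_injective)
    have := LinearMap.finrank_range_add_finrank_ker ρ
    rw [hρ, finrank_top, finrank_pi, finrank_pi, Fintype.card_subtype_compl] at this
    rw [Nat.card_eq_fintype_card]
    have := Fintype.card_subtype_le fun i => d i < 0
    omega
  · intro z hz hz0
    have hz' : ∀ i, ¬ d i < 0 → z i = 0 := fun i hi => congrFun hz ⟨i, hi⟩
    obtain ⟨j, hj⟩ := Function.ne_iff.mp hz0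
    have hdj : d j < 0 := by
      by_contra h
      exact hj (hz' j h)
    rw [Matrix.toBilin'_apply']
    simp only [dotProduct, mulVec_diagonal]
    refine (Finset.sum_lt_sum (g := fun _ => 0) (fun i _ => ?_) ⟨j, Finset.mem_univ j, ?_⟩).trans_eq
      Finset.sum_const_zero
    · by_cases hi : d i < 0
      · nlinarith [mul_self_nonneg (z i)]
      · simp [hz' i hi]
    · nlinarith [mul_self_pos.mpr hj]

lemma formR_mulVec_mulVec {G : Matrix ι ι ℤ} {P : Matrix ι ι ℝ} {d : ι → ℝ}
    (hP : P.transpose * G.map (Int.cast : ℤ → ℝ) * P = Matrix.diagonal d) (z z' : ι → ℝ) :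
    formR G (P *ᵥ z) (P *ᵥ z') = Matrix.toBilin' (Matrix.diagonal d) z z' := by
  rw [← hP, ← Matrix.toBilin'_comp]
  rfl

lemma HasSignature.exists_negDef {G : Matrix ι ι ℤ} {p q : ℕ} (h : HasSignature G p q) :
    ∃ N : Submodule ℝ (ι → ℝ), finrank ℝ N = q ∧ ∀ y ∈ N, y ≠ 0 → formR G y y < 0 := by
  obtain ⟨P, d, hP, hdiag, -, hq⟩ := h
  obtain ⟨N, hN, hneg⟩ := exists_negDef_diagonal d
  let e := P.toLinearEquiv' (P.invertibleOfIsUnitDet hP)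
  refine ⟨N.map e.toLinearMap, by rw [LinearEquiv.finrank_map_eq, hN, hq], ?_⟩
  rintro _ ⟨z, hz, rfl⟩ hz0
  have hz0' : z ≠ 0 := by
    rintro rfl
    exact hz0 (map_zero _)
  change formR G (P *ᵥ z) (P *ᵥ z) < 0
  rw [formR_mulVec_mulVec hdiag]
  exact hneg z hz hz0'

lemma formR_neg_of_orthogonal_pair {G : Matrix ι ι ℤ} {q : ℕ} (hsym : G.IsSymm)
    (hsig : HasSignature G 2 q) (hcard : Fintype.card ι ≤ 2 + q)
    {a b : ι → ℝ} (hab : formR G a b = 0) (ha : 0 < formR G a a) (hb : 0 < formR G b b)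
    {x : ι → ℝ} (hxa : formR G x a = 0) (hxb : formR G x b = 0) (hx0 : x ≠ 0) :
    formR G x x < 0 := by
  have hB : (formR G).IsSymm := Matrix.isSymm_toBilin'_iff_isSymm.mpr (hsym.map _)
  have hba : formR G b a = 0 := by rw [hB.eq]; exact hab
  obtain ⟨N, hNdim, hN⟩ := hsig.exists_negDef
  have hU := posDef_span_pair hab hba ha hb
  have hUN : IsCompl (Submodule.span ℝ {a, b}) N := by
    refine isCompl_of_posDef_of_negDef hU hN ?_
    rwa [finrank_span_pair hab hba ha.ne' hb.ne', hNdim, finrank_pi]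
  refine apply_self_neg_of_mem_orthogonal hB hUN.codisjoint hU hN ?_ hx0
  rintro u hu
  obtain ⟨s, t, rfl⟩ := Submodule.mem_span_pair.mp hu
  simp [hB.eq _ x, hxa, hxb]

end Signature

section Complex

variable {ι : Type} [Fintype ι] (G : Matrix ι ι ℤ)

lemma bC_toC (x y : ι → ℤ) : bC G (toC ι x) (toC ι y) = bZ G x y := by
  simp [bC, bZ, toC, dotProduct, Matrix.mulVec]

lemma star_mem_span_image_toC {X : Set (ι → ℤ)} {v : ι → ℂ}
    (hv : v ∈ Submodule.span ℂ (toC ι '' X)) : star v ∈ Submodule.span ℂ (toC ι '' X) := by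
  let f : (ι → ℂ) →ₗ⋆[ℂ] (ι → ℂ) := (starLinearEquiv ℂ).toLinearMap
  have hfix : f '' (toC ι '' X) = toC ι '' X := by
    rw [Set.image_image]
    refine Set.image_congr fun x _ => ?_
    funext i
    simp [f, toC]
  rw [← hfix, ← Submodule.map_span]
  exact Submodule.mem_map_of_mem (f := f) hv

variable [DecidableEq ι]

lemma bC_eq_toBilin' (x y : ι → ℂ) : bC G x y = Matrix.toBilin' (G.map (Int.cast : ℤ → ℂ)) x y :=
  (Matrix.toBilin'_apply' _ _ _).symm

lemma re_bC (x y : ι → ℂ) :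
    (bC G x y).re = formR G (Complex.re ∘ x) (Complex.re ∘ y) -
      formR G (Complex.im ∘ x) (Complex.im ∘ y) := by
  simp only [bC_eq_toBilin', formR, Matrix.toBilin'_apply, Complex.re_sum, ← Finset.sum_sub_distrib]
  refine Finset.sum_congr rfl fun i _ => Finset.sum_congr rfl fun j _ => ?_
  simp

lemma im_bC (x y : ι → ℂ) :
    (bC G x y).im = formR G (Complex.re ∘ x) (Complex.im ∘ y) +
      formR G (Complex.im ∘ x) (Complex.re ∘ y) := by
  simp only [bC_eq_toBilin', formR, Matrix.toBilin'_apply, Complex.im_sum, ← Finset.sum_add_distrib]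
  refine Finset.sum_congr rfl fun i _ => Finset.sum_congr rfl fun j _ => ?_
  simp

lemma re_bC_star (x y : ι → ℂ) :
    (bC G x (star y)).re = formR G (Complex.re ∘ x) (Complex.re ∘ y) +
      formR G (Complex.im ∘ x) (Complex.im ∘ y) := by
  have him : Complex.im ∘ star y = -(Complex.im ∘ y) := by funext i; simp
  have hre : Complex.re ∘ star y = Complex.re ∘ y := by funext i; simp
  rw [re_bC, him, hre, map_neg, sub_neg_eq_add]

lemma im_bC_star (x y : ι → ℂ) :
    (bC G x (star y)).im = formR G (Complex.im ∘ x) (Complex.re ∘ y) -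
      formR G (Complex.re ∘ x) (Complex.im ∘ y) := by
  have him : Complex.im ∘ star y = -(Complex.im ∘ y) := by funext i; simp
  have hre : Complex.re ∘ star y = Complex.re ∘ y := by funext i; simp
  rw [im_bC, him, hre, map_neg]
  ring

lemma formR_re_im_of_isotropic {w : ι → ℂ} (hww : bC G w w = 0) {t : ℝ}
    (hwt : bC G w (star w) = t) :
    formR G (Complex.re ∘ w) (Complex.re ∘ w) = t / 2 ∧
      formR G (Complex.im ∘ w) (Complex.im ∘ w) = t / 2 ∧
      formR G (Complex.re ∘ w) (Complex.im ∘ w) = 0 := by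
  have h₁ := congrArg Complex.re hww
  have h₂ := congrArg Complex.im hww
  have h₃ := congrArg Complex.re hwt
  have h₄ := congrArg Complex.im hwt
  rw [re_bC] at h₁
  rw [im_bC] at h₂
  rw [re_bC_star, Complex.ofReal_re] at h₃
  rw [im_bC_star, Complex.ofReal_im] at h₄
  refine ⟨?_, ?_, ?_⟩ <;> simp only [Complex.zero_re, Complex.zero_im] at h₁ h₂ <;> linarith

lemma formR_re_im_eq_zero {x w : ι → ℂ} (h : bC G x w = 0) (h' : bC G x (star w) = 0) :
    formR G (Complex.re ∘ x) (Complex.re ∘ w) = 0 ∧ formR G (Complex.re ∘ x) (Complex.im ∘ w) = 0 ∧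
      formR G (Complex.im ∘ x) (Complex.re ∘ w) = 0 ∧
      formR G (Complex.im ∘ x) (Complex.im ∘ w) = 0 := by
  have h₁ := congrArg Complex.re h
  have h₂ := congrArg Complex.im h
  have h₃ := congrArg Complex.re h'
  have h₄ := congrArg Complex.im h'
  rw [re_bC] at h₁
  rw [im_bC] at h₂
  rw [re_bC_star] at h₃
  rw [im_bC_star] at h₄
  simp only [Complex.zero_re, Complex.zero_im] at h₁ h₂ h₃ h₄
  refine ⟨?_, ?_, ?_, ?_⟩ <;> linarith

lemma eq_zero_of_bC_star_self_eq_zero {q : ℕ} (hsym : G.IsSymm) (hsig : HasSignature G 2 q)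
    (hcard : Fintype.card ι ≤ 2 + q) {w : ι → ℂ} (hww : bC G w w = 0) {t : ℝ} (ht : 0 < t)
    (hwt : bC G w (star w) = t) {v : ι → ℂ} (hvw : bC G v w = 0) (hvw' : bC G v (star w) = 0)
    (hvv : bC G v (star v) = 0) : v = 0 := by
  obtain ⟨haa, hbb, hab⟩ := formR_re_im_of_isotropic G hww hwt
  have hneg {x : ι → ℝ} (hxa : formR G x (Complex.re ∘ w) = 0)
      (hxb : formR G x (Complex.im ∘ w) = 0) (hx0 : x ≠ 0) : formR G x x < 0 :=
    formR_neg_of_orthogonal_pair hsym hsig hcard hab (by linarith) (by linarith) hxa hxb hx0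
  have hnonpos {x : ι → ℝ} (hxa : formR G x (Complex.re ∘ w) = 0)
      (hxb : formR G x (Complex.im ∘ w) = 0) : formR G x x ≤ 0 := by
    rcases eq_or_ne x 0 with rfl | hx0
    · simp
    · exact (hneg hxa hxb hx0).le
  obtain ⟨hpa, hpb, hqa, hqb⟩ := formR_re_im_eq_zero G hvw hvw'
  have hnorm := congrArg Complex.re hvv
  rw [re_bC_star, Complex.zero_re] at hnorm
  have hre : Complex.re ∘ v = 0 := by_contra fun h => by linarith [hneg hpa hpb h, hnonpos hqa hqb]
  have him : Complex.im ∘ v = 0 := by_contra fun h => by linarith [hneg hqa hqb h, hnonpos hpa hpb]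
  funext i
  exact Complex.ext (congrFun hre i) (congrFun him i)

end Complex

theorem stmt_1_general (n : ℕ) (G : Matrix (Fin (n + 2)) (Fin (n + 2)) ℤ)
    (hsym : G.IsSymm) (hsig : HasSignature G 2 n)
    (w : Fin (n + 2) → ℂ) (hww : bC G w w = 0)
    (hwwbar : ∃ t : ℝ, 0 < t ∧ bC G w (star w) = (t : ℂ))
    (S T : Set (Fin (n + 2) → ℤ))
    (hS : S = {x | bC G (toC _ x) w = 0 ∧ bC G (toC _ x) (star w) = 0})
    (hT : T = {x | ∀ s ∈ S, bZ G x s = 0}) :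
    Submodule.span ℂ (⇑(toC (Fin (n + 2))) '' S) ⊓
      Submodule.span ℂ (⇑(toC (Fin (n + 2))) '' T) = ⊥ := by
  subst hS hT
  obtain ⟨t, ht, hwt⟩ := hwwbar
  rw [eq_bot_iff]
  rintro v ⟨hvS, hvT⟩
  have hvw : ∀ y ∈ ({w, star w} : Set _), bC G v y = 0 := fun y hy => by
    rw [bC_eq_toBilin']
    refine LinearMap.apply_eq_zero_of_mem_span _ ?_ hvS (Submodule.subset_span hy)
    rintro _ ⟨s, hs, rfl⟩ y (rfl | rfl) <;> rw [← bC_eq_toBilin'] <;> simp_all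
  have hvv : bC G v (star v) = 0 := by
    rw [bC_eq_toBilin']
    refine LinearMap.apply_eq_zero_of_mem_span _ ?_ hvT (star_mem_span_image_toC hvS)
    rintro _ ⟨x, hx, rfl⟩ _ ⟨s, hs, rfl⟩
    rw [← bC_eq_toBilin', bC_toC, hx s hs, Int.cast_zero]
  exact eq_zero_of_bC_star_self_eq_zero G hsym hsig (by simp [add_comm]) hww ht hwt
    (hvw w (by simp)) (hvw (star w) (by simp)) hvv

/-- **Lemma 2.2 (S_T_are_disjoint).** Let `L` be a lattice of signature `(2,n)`,
`w ∈ L⊗ℂ` with `(w,w) = 0`, `(w,w̄) > 0`, and let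
`S = {x ∈ L : (x,w) = 0 and (x,w̄) = 0}`, `T = S^⊥ ∩ L`.  Then
`(S⊗ℂ) ∩ (T⊗ℂ) = {0}` inside `L⊗ℂ`. -/
theorem stmt_1 (n : ℕ) (G : Matrix (Fin (n + 2)) (Fin (n + 2)) ℤ)
    (hsym : G.IsSymm) (hdet : G.det ≠ 0) (hsig : HasSignature G 2 n)
    (w : Fin (n + 2) → ℂ) (hww : bC G w w = 0)
    (hwwbar : ∃ t : ℝ, 0 < t ∧ bC G w (star w) = (t : ℂ))
    (S T : Set (Fin (n + 2) → ℤ))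
    (hS : S = {x | bC G (toC _ x) w = 0 ∧ bC G (toC _ x) (star w) = 0})
    (hT : T = {x | ∀ s ∈ S, bZ G x s = 0}) :
    Submodule.span ℂ (⇑(toC (Fin (n + 2))) '' S) ⊓
      Submodule.span ℂ (⇑(toC (Fin (n + 2))) '' T) = ⊥ :=
  stmt_1_general n G hsym hsig w hww hwwbar S T hS hT

end A0607339
end

section
/- Let L be a lattice of signature (2,n), let w ∈ L⊗ℂ satisfy (w,w) = 0 and (w,w̄) > 0, and set S = {x ∈ L : (x,w) = 0 and (x,w̄) = 0} and T = {x ∈ L : (x,s) = 0 for all s ∈ S}. If g is an isometry of L with g(w) = w (extending g ℂ-linearly to L⊗ℂ), then g(x) = x for every x ∈ T; in particular g acts trivially on T⊗ℚ. -/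
/-!
Write `w = a + i b` with `a, b ∈ L ⊗ ℝ`. The conditions `(w,w) = 0` and `(w,w̄) > 0` say that
`a` and `b` are orthogonal of the same positive norm; as the form has only two positive squares,
a vector orthogonal to both and of nonnegative norm is zero. For `x ∈ T` put `z = g x - x`.
Since `g` fixes `w` and `w̄`, `z ∈ S` and `g` preserves `S`, so
`(z,z) = (g x, z) - (x, z) = (x, g⁻¹ z) - (x, z) = 0`, whence `z = 0`.
-/

namespace A0607339

/-- The `ℂ`-linear extension of a `ℤ`-linear endomorphism of the lattice. -/
noncomputable def extC {ι : Type} [Fintype ι] [DecidableEq ι]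
    (g : (ι → ℤ) →ₗ[ℤ] (ι → ℤ)) : (ι → ℂ) →ₗ[ℂ] (ι → ℂ) :=
  Matrix.toLin' ((LinearMap.toMatrix' g).map (Int.cast : ℤ → ℂ))

open Matrix

lemma exists_ne_zero_sum_smul_eq_zero_on {K ι κ : Type*} [Field K] [Fintype κ]
    (f : κ → ι → K) (s : Set ι) [Finite s] (h : Nat.card s < Fintype.card κ) :
    ∃ c : κ → K, c ≠ 0 ∧ ∀ i ∈ s, (∑ j, c j • f j) i = 0 := by
  have := Fintype.ofFinite s
  let ψ := LinearMap.funLeft K K ((↑) : s → ι) ∘ₗ Fintype.linearCombination K f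
  have hker : LinearMap.ker ψ ≠ ⊥ := LinearMap.ker_ne_bot_of_finrank_lt <| by
    simpa [Module.finrank_fintype_fun_eq_card, Nat.card_eq_fintype_card] using h
  obtain ⟨c, hc, hc0⟩ := Submodule.exists_mem_ne_zero_of_ne_bot hker
  refine ⟨c, hc0, fun i hi => ?_⟩
  simpa [ψ, Fintype.linearCombination_apply, LinearMap.funLeft_apply]
    using congrFun hc ⟨i, hi⟩

section DiagonalForm

variable {ι : Type*} [Fintype ι] [DecidableEq ι] {d : ι → ℝ}

lemma dotProduct_diagonal_mulVec (d x y : ι → ℝ) :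
    x ⬝ᵥ (diagonal d *ᵥ y) = ∑ i, d i * x i * y i := by
  simp only [dotProduct, mulVec_diagonal]
  exact Finset.sum_congr rfl fun i _ => by ring

lemma dotProduct_diagonal_mulVec_comm (d x y : ι → ℝ) :
    x ⬝ᵥ (diagonal d *ᵥ y) = y ⬝ᵥ (diagonal d *ᵥ x) := by
  simp only [dotProduct_diagonal_mulVec]
  exact Finset.sum_congr rfl fun i _ => by ring

lemma eq_zero_of_vanishing_on_positive (hd : ∀ i, d i ≠ 0) {v : ι → ℝ}
    (hv : ∀ i, 0 < d i → v i = 0) (hvv : 0 ≤ v ⬝ᵥ (diagonal d *ᵥ v)) : v = 0 := by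
  rw [dotProduct_diagonal_mulVec] at hvv
  have hterm : ∀ i ∈ Finset.univ, d i * v i * v i ≤ 0 := fun i _ => by
    rcases (hd i).lt_or_gt with hneg | hpos
    · nlinarith [mul_self_nonneg (v i)]
    · simp [hv i hpos]
  have hzero := (Finset.sum_eq_zero_iff_of_nonpos hterm).mp
    (le_antisymm (Finset.sum_nonpos hterm) hvv)
  funext i
  simpa [hd i] using hzero i (Finset.mem_univ i)

lemma eq_zero_of_orthogonal_positive_pair (hd : ∀ i, d i ≠ 0)
    (hcard : Nat.card {i // 0 < d i} ≤ 2) {a b u : ι → ℝ}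
    (ha : 0 < a ⬝ᵥ (diagonal d *ᵥ a)) (hb : 0 < b ⬝ᵥ (diagonal d *ᵥ b))
    (hab : a ⬝ᵥ (diagonal d *ᵥ b) = 0) (hua : u ⬝ᵥ (diagonal d *ᵥ a) = 0)
    (hub : u ⬝ᵥ (diagonal d *ᵥ b) = 0) (hu : 0 ≤ u ⬝ᵥ (diagonal d *ᵥ u)) : u = 0 := by
  obtain ⟨c, hc, hv⟩ := exists_ne_zero_sum_smul_eq_zero_on ![a, b, u] {i | 0 < d i}
    (by simp only [Fintype.card_fin]; exact hcard.trans_lt (by norm_num))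
  simp only [Fin.sum_univ_three, cons_val_zero, cons_val_one, cons_val_two, Nat.succ_eq_add_one,
    Nat.reduceAdd, tail_cons, head_cons] at hv
  set v := c 0 • a + c 1 • b + c 2 • u
  -- `v` vanishes on the positive coordinates, yet its norm is a sum of nonnegative terms.
  have hnorm : v ⬝ᵥ (diagonal d *ᵥ v) = c 0 ^ 2 * a ⬝ᵥ (diagonal d *ᵥ a)
      + c 1 ^ 2 * b ⬝ᵥ (diagonal d *ᵥ b) + c 2 ^ 2 * u ⬝ᵥ (diagonal d *ᵥ u) := by
    simp only [v, mulVec_add, mulVec_smul, dotProduct_add, add_dotProduct, dotProduct_smul,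
      smul_dotProduct, smul_eq_mul]
    rw [dotProduct_diagonal_mulVec_comm d b a, dotProduct_diagonal_mulVec_comm d a u,
      dotProduct_diagonal_mulVec_comm d b u, hab, hua, hub]
    ring
  have hv0 : v = 0 := eq_zero_of_vanishing_on_positive hd hv (by rw [hnorm]; positivity)
  have hc01 : c 0 = 0 ∧ c 1 = 0 := by
    rw [hv0, zero_dotProduct] at hnorm
    have h0 := mul_nonneg (sq_nonneg (c 0)) ha.le
    have h1 := mul_nonneg (sq_nonneg (c 1)) hb.le
    have h2 := mul_nonneg (sq_nonneg (c 2)) hu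
    constructor
    · simpa [ha.ne'] using (by linarith : c 0 ^ 2 * a ⬝ᵥ (diagonal d *ᵥ a) = 0)
    · simpa [hb.ne'] using (by linarith : c 1 ^ 2 * b ⬝ᵥ (diagonal d *ᵥ b) = 0)
  have hc2 : c 2 ≠ 0 := fun h2 => hc <| by
    ext j; fin_cases j <;> simp [hc01.1, hc01.2, h2]
  simpa [v, hc01.1, hc01.2, hc2] using hv0

end DiagonalForm

lemma mulVec_dotProduct_mulVec_mulVec {ι R : Type*} [Fintype ι] [CommRing R]
    (A M : Matrix ι ι R) (x y : ι → R) :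
    (M *ᵥ x) ⬝ᵥ (A *ᵥ (M *ᵥ y)) = x ⬝ᵥ ((Mᵀ * A * M) *ᵥ y) := by
  rw [mulVec_mulVec, dotProduct_mulVec, ← vecMul_transpose, vecMul_vecMul,
    ← Matrix.mul_assoc, ← dotProduct_mulVec]

section Lattice

variable {ι : Type} [Fintype ι]

def bR (G : Matrix ι ι ℤ) (x y : ι → ℝ) : ℝ :=
  x ⬝ᵥ (G.map (Int.cast : ℤ → ℝ) *ᵥ y)

lemma bR_comm {G : Matrix ι ι ℤ} (hsym : G.IsSymm) (x y : ι → ℝ) :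
    bR G x y = bR G y x := by
  rw [bR, dotProduct_mulVec, ← mulVec_transpose, ← transpose_map, hsym.eq, dotProduct_comm, bR]

lemma bR_neg_right (G : Matrix ι ι ℤ) (x y : ι → ℝ) : bR G x (-y) = -bR G x y := by
  simp [bR, mulVec_neg]

lemma bR_zero_left (G : Matrix ι ι ℤ) (y : ι → ℝ) : bR G 0 y = 0 := by
  simp [bR]

lemma bR_intCast (G : Matrix ι ι ℤ) (x y : ι → ℤ) :
    bR G (fun i => (x i : ℝ)) (fun i => (y i : ℝ)) = bZ G x y := by
  simp [bR, bZ, dotProduct, mulVec]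

lemma HasSignature.eq_zero_of_orthogonal_positive_pair [DecidableEq ι] {G : Matrix ι ι ℤ}
    {p q : ℕ} (hsig : HasSignature G p q) (hp : p ≤ 2) (hdet : G.det ≠ 0) {a b u : ι → ℝ}
    (ha : 0 < bR G a a) (hb : 0 < bR G b b) (hab : bR G a b = 0) (hua : bR G u a = 0)
    (hub : bR G u b = 0) (hu : 0 ≤ bR G u u) : u = 0 := by
  obtain ⟨P, d, hP, hdiag, hpos, -⟩ := hsig
  have hd : ∀ i, d i ≠ 0 := by
    have hdetR : (G.map (Int.cast : ℤ → ℝ)).det ≠ 0 := by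
      have hcast : (G.map (Int.cast : ℤ → ℝ)).det = G.det :=
        ((Int.castRingHom ℝ).map_det G).symm
      exact hcast ▸ Int.cast_ne_zero.mpr hdet
    have : (diagonal d).det ≠ 0 := by
      rw [← hdiag, det_mul, det_mul, det_transpose]
      exact mul_ne_zero (mul_ne_zero hP.ne_zero hdetR) hP.ne_zero
    simpa [det_diagonal, Finset.prod_ne_zero_iff] using this
  have hchange : ∀ x y, bR G (P *ᵥ x) (P *ᵥ y) = x ⬝ᵥ (diagonal d *ᵥ y) := fun x y => by
    rw [← hdiag, bR, mulVec_dotProduct_mulVec_mulVec]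
  have hPinv : ∀ x, P *ᵥ (P⁻¹ *ᵥ x) = x := fun x => by
    rw [mulVec_mulVec, mul_nonsing_inv _ hP, one_mulVec]
  have hform : ∀ x y, (P⁻¹ *ᵥ x) ⬝ᵥ (diagonal d *ᵥ (P⁻¹ *ᵥ y)) = bR G x y := by
    intro x y
    rw [← hchange, hPinv, hPinv]
  have hu' := A0607339.eq_zero_of_orthogonal_positive_pair hd (hpos ▸ hp) (a := P⁻¹ *ᵥ a)
    (b := P⁻¹ *ᵥ b) (u := P⁻¹ *ᵥ u) (by rwa [hform]) (by rwa [hform]) (by rwa [hform])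
    (by rwa [hform]) (by rwa [hform]) (by rwa [hform])
  simpa [hu'] using (hPinv u).symm

lemma toC_apply (x : ι → ℤ) (i : ι) : toC ι x i = (x i : ℂ) := rfl

lemma re_bC_s2 (G : Matrix ι ι ℤ) (u v : ι → ℂ) :
    (bC G u v).re = bR G (fun i => (u i).re) (fun i => (v i).re)
      - bR G (fun i => (u i).im) (fun i => (v i).im) := by
  simp [bC, bR, dotProduct, mulVec, Complex.re_sum, Finset.mul_sum, Finset.sum_sub_distrib]

lemma im_bC_s2 (G : Matrix ι ι ℤ) (u v : ι → ℂ) :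
    (bC G u v).im = bR G (fun i => (u i).re) (fun i => (v i).im)
      + bR G (fun i => (u i).im) (fun i => (v i).re) := by
  simp [bC, bR, dotProduct, mulVec, Complex.im_sum, Finset.mul_sum, Finset.sum_add_distrib]

lemma bC_sub_left (G : Matrix ι ι ℤ) (u v c : ι → ℂ) :
    bC G (u - v) c = bC G u c - bC G v c := by
  simp [bC, sub_dotProduct]

lemma eq_zero_of_isotropic_orthogonal [DecidableEq ι] {G : Matrix ι ι ℤ} {p q : ℕ}
    (hsym : G.IsSymm) (hdet : G.det ≠ 0) (hsig : HasSignature G p q) (hp : p ≤ 2)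
    {w : ι → ℂ} (hww : bC G w w = 0) (hwwbar : 0 < (bC G w (star w)).re) {z : ι → ℤ}
    (hzw : bC G (toC ι z) w = 0) (hzz : 0 ≤ bZ G z z) : z = 0 := by
  have hre := congrArg Complex.re hww
  have him := congrArg Complex.im hww
  have hzre := congrArg Complex.re hzw
  have hzim := congrArg Complex.im hzw
  simp only [re_bC_s2, im_bC_s2, Complex.zero_re, Complex.zero_im, Pi.star_apply, Complex.star_def,
    Complex.conj_re, Complex.conj_im, toC_apply, Complex.intCast_re, Complex.intCast_im,
    ← Pi.neg_def, ← Pi.zero_def, bR_neg_right, bR_zero_left, sub_zero, add_zero,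
    sub_neg_eq_add] at hre him hwwbar hzre hzim
  set a : ι → ℝ := fun i => (w i).re
  set b : ι → ℝ := fun i => (w i).im
  have hab : bR G a b = 0 := by linarith [bR_comm hsym a b]
  have hz := hsig.eq_zero_of_orthogonal_positive_pair hp hdet (a := a) (b := b)
    (u := fun i => (z i : ℝ)) (by linarith) (by linarith) hab hzre hzim
    (by rw [bR_intCast]; exact_mod_cast hzz)
  funext i
  simpa using congrFun hz i

section Isometry

variable [DecidableEq ι] {G : Matrix ι ι ℤ} {g : (ι → ℤ) →ₗ[ℤ] (ι → ℤ)}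

lemma extC_apply (g : (ι → ℤ) →ₗ[ℤ] (ι → ℤ)) (u : ι → ℂ) :
    extC g u = (LinearMap.toMatrix' g).map (Int.cast : ℤ → ℂ) *ᵥ u :=
  Matrix.toLin'_apply _ _

lemma extC_toC (g : (ι → ℤ) →ₗ[ℤ] (ι → ℤ)) (x : ι → ℤ) :
    extC g (toC ι x) = toC ι (g x) := by
  funext i
  rw [extC_apply, ← LinearMap.toMatrix'_mulVec g x]
  simp only [toC_apply, mulVec, dotProduct, Matrix.map_apply]
  push_cast
  rfl

lemma extC_star (g : (ι → ℤ) →ₗ[ℤ] (ι → ℤ)) (u : ι → ℂ) :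
    extC g (star u) = star (extC g u) := by
  funext i
  simp [extC_apply, mulVec, dotProduct, star_sum]

lemma transpose_toMatrix'_mul_mul_toMatrix' (hg : ∀ x y, bZ G (g x) (g y) = bZ G x y) :
    (LinearMap.toMatrix' g)ᵀ * G * LinearMap.toMatrix' g = G := by
  ext i j
  have h := hg (Pi.single i 1) (Pi.single j 1)
  rw [bZ, bZ, ← LinearMap.toMatrix'_mulVec, ← LinearMap.toMatrix'_mulVec,
    mulVec_dotProduct_mulVec_mulVec] at h
  simpa [mulVec_single, single_dotProduct] using h

lemma bC_extC_extC (hg : ∀ x y, bZ G (g x) (g y) = bZ G x y) (u v : ι → ℂ) :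
    bC G (extC g u) (extC g v) = bC G u v := by
  have h := congrArg (fun A => A.map (Int.castRingHom ℂ))
    (transpose_toMatrix'_mul_mul_toMatrix' hg)
  rw [Matrix.map_mul, Matrix.map_mul, transpose_map] at h
  simp only [Int.coe_castRingHom] at h
  rw [bC, extC_apply, extC_apply, mulVec_dotProduct_mulVec_mulVec, h, bC]

lemma bC_toC_apply_of_extC_eq (hg : ∀ x y, bZ G (g x) (g y) = bZ G x y) {c : ι → ℂ}
    (hc : extC g c = c) (x : ι → ℤ) : bC G (toC ι (g x)) c = bC G (toC ι x) c := by
  calc bC G (toC ι (g x)) c = bC G (extC g (toC ι x)) (extC g c) := by rw [extC_toC, hc]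
    _ = bC G (toC ι x) c := bC_extC_extC hg _ _

end Isometry

end Lattice

/-- **Lemma 2.4 (G0_acts_trivially_on_T).** In the situation of Lemma 2.2, if `g` is
an isometry of `L` with `g(w) = w`, then `g` fixes every `x ∈ T`; in particular `g`
acts trivially on `T⊗ℚ`. -/
theorem stmt_2 (n : ℕ) (G : Matrix (Fin (n + 2)) (Fin (n + 2)) ℤ)
    (hsym : G.IsSymm) (hdet : G.det ≠ 0) (hsig : HasSignature G 2 n)
    (w : Fin (n + 2) → ℂ) (hww : bC G w w = 0)
    (hwwbar : ∃ t : ℝ, 0 < t ∧ bC G w (star w) = (t : ℂ))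
    (S T : Set (Fin (n + 2) → ℤ))
    (hS : S = {x | bC G (toC _ x) w = 0 ∧ bC G (toC _ x) (star w) = 0})
    (hT : T = {x | ∀ s ∈ S, bZ G x s = 0})
    (g : (Fin (n + 2) → ℤ) ≃ₗ[ℤ] (Fin (n + 2) → ℤ))
    (hgiso : ∀ x y, bZ G (g x) (g y) = bZ G x y)
    (hgw : extC (g : (Fin (n + 2) → ℤ) →ₗ[ℤ] (Fin (n + 2) → ℤ)) w = w) :
    ∀ x ∈ T, g x = x := by
  intro x hx
  rw [hT] at hx
  have hgw' : extC (g : (Fin (n + 2) → ℤ) →ₗ[ℤ] (Fin (n + 2) → ℤ)) (star w) = star w :=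
    (extC_star _ w).trans (congrArg star hgw)
  have hgS : ∀ y, g y ∈ S ↔ y ∈ S := fun y => by
    simp only [hS, Set.mem_ofPred_eq]
    rw [← LinearEquiv.coe_coe, bC_toC_apply_of_extC_eq hgiso hgw,
      bC_toC_apply_of_extC_eq hgiso hgw']
  set z := g x - x
  have hzS : z ∈ S := by
    simp only [hS, Set.mem_ofPred_eq, z, map_sub, bC_sub_left]
    rw [← LinearEquiv.coe_coe, bC_toC_apply_of_extC_eq hgiso hgw,
      bC_toC_apply_of_extC_eq hgiso hgw', sub_self, sub_self]
    exact ⟨rfl, rfl⟩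
  have hzz : bZ G z z = 0 := by
    calc bZ G z z = bZ G (g x) (g (g.symm z)) - bZ G x z := by
          simp [z, bZ, sub_dotProduct]
      _ = 0 := by rw [hgiso, hx _ ((hgS _).1 (by simpa using hzS)), hx _ hzS, sub_self]
  obtain ⟨t, ht, hwt⟩ := hwwbar
  have hzw : bC G (toC _ z) w = 0 := by rw [hS] at hzS; exact hzS.1
  exact sub_eq_zero.mp <| eq_zero_of_isotropic_orthogonal hsym hdet hsig le_rfl hww
    (by simpa [hwt] using ht) hzw hzz.ge

end A0607339
end

section
/- Let g ∈ GL_n(ℤ) have finite order m > 1, and write the eigenvalues of g (as a complex matrix, with multiplicity) as e^{2πi·a_j/m} with integers 0 ≤ a_j < m for j = 1,…,n. If g is not a reflection (i.e., the eigenvalue multiset of g is not {1 with multiplicity n−1, −1 with multiplicity 1}), then Σ_{j=1}^n a_j/m ≥ 1. -/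
open Polynomial

lemma aux_nilpotent_order {n m : ℕ} (hn : 0 < n) (hm : 1 < m)
    (g : Matrix (Fin n) (Fin n) ℤ) (hnil : (g - 1) ^ n = 0) (hord : orderOf g = m) : False := by
  classical
  haveI : Nonempty (Fin n) := ⟨⟨0, hn⟩⟩
  set N : Matrix (Fin n) (Fin n) ℤ := g - 1 with hN
  have hg1 : g = 1 + N := by rw [hN]; abel
  have hpoly : ∀ i : ℕ, ∃ B : Polynomial ℤ,
      (1 + Polynomial.X) ^ i = 1 + (i : Polynomial ℤ) * Polynomial.X + Polynomial.X ^ 2 * B := by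
    intro i
    induction i with
    | zero => exact ⟨0, by simp⟩
    | succ i ih =>
      obtain ⟨B, hB⟩ := ih
      exact ⟨(i : Polynomial ℤ) + B + B * Polynomial.X, by rw [pow_succ, hB]; push_cast; ring⟩
  obtain ⟨B, hB⟩ := hpoly m
  have happ := congrArg (Polynomial.aeval N) hB
  simp only [map_add, map_one, map_pow, map_mul, Polynomial.aeval_X, map_natCast] at happ
  set C : Matrix (Fin n) (Fin n) ℤ := Polynomial.aeval N B with hC
  have hcomm : Commute N C := by
    have : Commute (Polynomial.X : Polynomial ℤ) B := Commute.all _ _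
    simpa [hC] using this.map (Polynomial.aeval N).toRingHom
  have hgm : g ^ m = 1 := by rw [← hord]; exact pow_orderOf_eq_one g
  rw [← hg1, hgm] at happ
  have heq : (m : Matrix (Fin n) (Fin n) ℤ) * N + N ^ 2 * C = 0 := by
    have h := happ.symm
    rwa [add_assoc, add_eq_left] at h
  -- find minimal vanishing power
  have hex : ∃ k, N ^ k = 0 := ⟨n, hnil⟩
  have hNne : N ≠ 0 := by
    intro h
    have hg' : g = 1 := by rw [hg1, h, add_zero]
    rw [hg', orderOf_one] at hord; omega
  have hone : (1 : Matrix (Fin n) (Fin n) ℤ) ≠ 0 := one_ne_zero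
  set j := Nat.find hex with hj
  have hj0 : N ^ j = 0 := Nat.find_spec hex
  have hj2 : 2 ≤ j := by
    by_contra h
    interval_cases j
    · exact hone (by simpa using hj0)
    · exact hNne (by simpa using hj0)
  set k := j - 1 with hk
  have hk1 : 1 ≤ k := by omega
  have hkne : N ^ k ≠ 0 := Nat.find_min hex (by omega)
  have hksucc : N ^ (k + 1) = 0 := by
    have hkj : k + 1 = j := by omega
    rw [hkj]; exact hj0
  -- multiply heq by N^(k-1)
  have hmul := congrArg (fun X => X * N ^ (k - 1)) heq
  simp only [add_mul, zero_mul] at hmul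
  have h1 : (m : Matrix (Fin n) (Fin n) ℤ) * N * N ^ (k - 1) = (m : Matrix (Fin n) (Fin n) ℤ) * N ^ k := by
    rw [mul_assoc, ← pow_succ']
    congr 2
    omega
  have h2 : N ^ 2 * C * N ^ (k - 1) = 0 := by
    have hcp : Commute (N ^ (k - 1)) C := hcomm.pow_left (k - 1)
    rw [mul_assoc, hcp.symm.eq, ← mul_assoc, ← pow_add]
    have h21 : 2 + (k - 1) = k + 1 := by omega
    rw [h21, hksucc, zero_mul]
  rw [h1, h2, add_zero, ← nsmul_eq_mul] at hmul
  apply hkne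
  ext i j'
  have h3 := congrFun (congrFun hmul i) j'
  simp only [Matrix.smul_apply, Matrix.zero_apply, smul_eq_mul, nsmul_eq_mul] at h3
  have hmz : (m : ℤ) ≠ 0 := by
    exact_mod_cast (by omega : m ≠ 0)
  have := (mul_eq_zero.mp h3).resolve_left hmz
  simpa using this

/-- **Proposition (toric_RST).** Let `g ∈ GL_n(ℤ)` have finite order `m > 1`, and
write the complex eigenvalues of `g` (with multiplicity) as `e^{2πi·a_j/m}` with
`0 ≤ a_j < m`.  If `g` is not a reflection, then `∑ a_j/m ≥ 1`. -/
theorem stmt_5 (n m : ℕ) (g : Matrix (Fin n) (Fin n) ℤ) (hg : IsUnit g.det)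
    (hm : 1 < m) (hord : orderOf g = m)
    (a : Fin n → ℕ) (ha : ∀ j, a j < m)
    (hev : ((g.map (Int.cast : ℤ → ℂ)).charpoly).roots =
      Multiset.map
        (fun j => Complex.exp (2 * (Real.pi : ℂ) * Complex.I * (a j : ℂ) / (m : ℂ)))
        Finset.univ.val)
    (hnotrefl : ((g.map (Int.cast : ℤ → ℂ)).charpoly).roots ≠
      Multiset.replicate (n - 1) 1 + {(-1 : ℂ)}) :
    (1 : ℝ) ≤ ∑ j, (a j : ℝ) / (m : ℝ) := by
  classical
  -- dispose of n = 0
  rcases Nat.eq_zero_or_pos n with hn0 | hn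
  · subst hn0
    have hg1 : g = 1 := Subsingleton.elim _ _
    rw [hg1, orderOf_one] at hord; omega
  have hm0 : m ≠ 0 := by omega
  set ζ : ℂ := Complex.exp (2 * (Real.pi : ℂ) * Complex.I / m) with hζdef
  have hζ : IsPrimitiveRoot ζ m := Complex.isPrimitiveRoot_exp m hm0
  have hfe : ∀ c : ℕ,
      Complex.exp (2 * (Real.pi : ℂ) * Complex.I * (c : ℂ) / (m : ℂ)) = ζ ^ c := by
    intro c
    rw [hζdef, ← Complex.exp_nat_mul]
    congr 1
    ring
  set p : Polynomial ℂ := (g.map (Int.cast : ℤ → ℂ)).charpoly with hp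
  have hroots : p.roots = Multiset.map (fun j => ζ ^ a j) Finset.univ.val := by
    rw [hp, hev]
    exact Multiset.map_congr rfl fun j _ => hfe (a j)
  -- conjugation stability
  have hsplit : p.Splits := IsAlgClosed.splits _
  have hmapeq : g.map (Int.cast : ℤ → ℂ) = g.map (Int.castRingHom ℂ) := rfl
  have hconjp : p.map (starRingEnd ℂ) = p := by
    rw [hp, hmapeq, Matrix.charpoly_map, Polynomial.map_map]
    congr 1
    ext x : 1
    simp
  have hstab : p.roots.map (starRingEnd ℂ) = p.roots := by
    rw [← hsplit.roots_map (starRingEnd ℂ), hconjp]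
  -- conjugate of powers
  have hζconj : (starRingEnd ℂ) ζ = ζ⁻¹ := by
    rw [hζdef, ← Complex.exp_conj, ← Complex.exp_neg]
    congr 1
    simp only [map_div₀, map_mul, Complex.conj_I, Complex.conj_ofReal, map_ofNat,
      map_natCast]
    ring
  set b : Fin n → ℕ := fun j => (m - a j) % m with hbdef
  have hb : ∀ j, b j < m := fun j => Nat.mod_lt _ (by omega)
  have hconjpow : ∀ j, (starRingEnd ℂ) (ζ ^ a j) = ζ ^ b j := by
    intro j
    rw [map_pow, hζconj, inv_pow]
    have hmul : ζ ^ b j * ζ ^ a j = 1 := by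
      rw [← pow_add]
      rcases Nat.eq_zero_or_pos (a j) with h0 | h0
      · simp [hbdef, h0, Nat.mod_self]
      · have h1 : b j = m - a j := Nat.mod_eq_of_lt (by have := ha j; omega)
        have h2 : b j + a j = m := by have := ha j; omega
        rw [h2, hζ.pow_eq_one]
    exact (eq_inv_of_mul_eq_one_left hmul).symm
  have hev' : Multiset.map (fun j => ζ ^ a j) Finset.univ.val
      = Multiset.map (fun j => ζ ^ b j) Finset.univ.val := by
    calc Multiset.map (fun j => ζ ^ a j) Finset.univ.val
        = Multiset.map (starRingEnd ℂ)
            (Multiset.map (fun j => ζ ^ a j) Finset.univ.val) := by rw [← hroots, hstab]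
      _ = Multiset.map (fun j => ζ ^ b j) Finset.univ.val := by
          rw [Multiset.map_map]
          exact Multiset.map_congr rfl fun j _ => hconjpow j
  -- lift to Fin m and sum
  have hinj : Function.Injective (fun x : Fin m => ζ ^ (x : ℕ)) := by
    intro x y h
    exact Fin.ext (hζ.pow_inj x.isLt y.isLt h)
  have hfin : Multiset.map (fun j => (⟨a j, ha j⟩ : Fin m)) Finset.univ.val
      = Multiset.map (fun j => (⟨b j, hb j⟩ : Fin m)) Finset.univ.val := by
    apply Multiset.map_injective hinj
    rw [Multiset.map_map, Multiset.map_map]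
    exact hev'
  have hsum : ∑ j, a j = ∑ j, b j := by
    have h := congrArg (fun s => (Multiset.map Fin.val s).sum) hfin
    simpa [Multiset.map_map, Function.comp_def, Finset.sum] using h
  have key : ∑ j, (a j + b j) = 2 * ∑ j, a j := by
    rw [Finset.sum_add_distrib, ← hsum]; ring
  have hab : ∀ j, a j ≠ 0 → a j + b j = m := by
    intro j h
    have h1 : b j = m - a j := Nat.mod_eq_of_lt (by have := ha j; omega)
    have := ha j; omega
  have hab0 : ∀ j, a j = 0 → a j + b j = 0 := by
    intro j h
    simp [hbdef, h, Nat.mod_self]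
  by_cases hall : ∀ j, a j = 0
  · -- all eigenvalues 1: g is nilpotent + finite order, contradiction
    exfalso
    have hroots1 : p.roots = Multiset.replicate n 1 := by
      rw [hroots]
      apply Multiset.eq_replicate.mpr
      constructor
      · simp
      · intro x hx
        obtain ⟨j, _, rfl⟩ := Multiset.mem_map.mp hx
        rw [hall j, pow_zero]
    have hpmonic : p.Monic := Matrix.charpoly_monic _
    have hfact : p = (Polynomial.X - Polynomial.C 1) ^ n := by
      have h := hsplit.eq_prod_roots_of_monic hpmonic
      rw [hroots1] at h
      simpa [Multiset.map_replicate, Multiset.prod_replicate] using h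
    have hCH := Matrix.aeval_self_charpoly (g.map (Int.cast : ℤ → ℂ))
    rw [← hp, hfact] at hCH
    have hCn : (g.map (Int.cast : ℤ → ℂ) - 1) ^ n = 0 := by
      simpa [map_pow, map_sub, Polynomial.aeval_X, Polynomial.aeval_C] using hCH
    have hZn : (g - 1) ^ n = 0 := by
      have hψ : ((g - 1) ^ n).map (Int.cast : ℤ → ℂ) = 0 := by
        have : ((g - 1) ^ n).map (Int.castRingHom ℂ)
            = ((Int.castRingHom ℂ).mapMatrix ((g - 1) ^ n)) := rfl
        rw [show ((g - 1) ^ n).map (Int.cast : ℤ → ℂ)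
              = (Int.castRingHom ℂ).mapMatrix ((g - 1) ^ n) from rfl]
        rw [map_pow, map_sub, map_one]
        rw [show (Int.castRingHom ℂ).mapMatrix g = g.map (Int.cast : ℤ → ℂ) from rfl]
        exact hCn
      ext i j'
      have := congrFun (congrFun hψ i) j'
      simp only [Matrix.map_apply, Matrix.zero_apply] at this ⊢
      exact_mod_cast this
    exact aux_nilpotent_order hn hm g hZn hord
  · push_neg at hall
    obtain ⟨j0, hj0⟩ := hall
    by_cases huniq : ∀ j, a j ≠ 0 → j = j0
    · -- reflection case: contradiction with hnotrefl
      exfalso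
      have hzero : ∀ j, j ≠ j0 → a j = 0 := by
        intro j hj
        by_contra h
        exact hj (huniq j h)
      have hsum1 : ∑ j, a j = a j0 := by
        apply Finset.sum_eq_single
        · intro j _ hj; exact hzero j hj
        · intro h; exact absurd (Finset.mem_univ j0) h
      have hsumab : ∑ j, (a j + b j) = m := by
        rw [Finset.sum_eq_single j0]
        · exact hab j0 hj0
        · intro j _ hj
          exact hab0 j (hzero j hj)
        · intro h; exact absurd (Finset.mem_univ j0) h
      have h2a : 2 * a j0 = m := by
        rw [key, hsum1] at hsumab
        omega
      have hζa : ζ ^ a j0 = -1 := by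
        rw [← hfe]
        have haj0 : (a j0 : ℂ) ≠ 0 := Nat.cast_ne_zero.mpr hj0
        have hmc : (m : ℂ) = 2 * (a j0 : ℂ) := by exact_mod_cast congrArg (Nat.cast : ℕ → ℂ) h2a.symm
        rw [hmc]
        rw [show 2 * (Real.pi : ℂ) * Complex.I * (a j0 : ℂ) / (2 * (a j0 : ℂ))
              = (Real.pi : ℂ) * Complex.I by field_simp]
        exact Complex.exp_pi_mul_I
      apply hnotrefl
      rw [hroots]
      have hmem : j0 ∈ (Finset.univ : Finset (Fin n)).val := Finset.mem_univ_val j0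
      rw [← Multiset.cons_erase hmem, Multiset.map_cons, hζa]
      have herase : (Finset.univ : Finset (Fin n)).val.erase j0
          = ((Finset.univ : Finset (Fin n)).erase j0).val := rfl
      have hrepl : Multiset.map (fun j => ζ ^ a j)
          ((Finset.univ : Finset (Fin n)).val.erase j0) = Multiset.replicate (n - 1) 1 := by
        apply Multiset.eq_replicate.mpr
        constructor
        · rw [Multiset.card_map, herase]
          simp [Finset.card_erase_of_mem]
        · intro x hx
          obtain ⟨j, hjmem, rfl⟩ := Multiset.mem_map.mp hx
          rw [herase] at hjmem
          rw [hzero j (Finset.ne_of_mem_erase (Finset.mem_def.mpr hjmem)), pow_zero]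
      rw [hrepl, add_comm, Multiset.singleton_add]
    · -- two distinct nonzero exponents
      push_neg at huniq
      obtain ⟨j1, hj1, hj1ne⟩ := huniq
      have hge : m ≤ ∑ j, a j := by
        have hsub : ({j0, j1} : Finset (Fin n)) ⊆ Finset.univ := Finset.subset_univ _
        have hpair : ∑ j ∈ ({j0, j1} : Finset (Fin n)), (a j + b j) = 2 * m := by
          rw [Finset.sum_pair (Ne.symm hj1ne), hab j0 hj0, hab j1 hj1]
          ring
        have hle : ∑ j ∈ ({j0, j1} : Finset (Fin n)), (a j + b j) ≤ ∑ j, (a j + b j) :=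
          Finset.sum_le_sum_of_subset hsub
        rw [hpair, key] at hle
        omega
      have hmr : (m : ℝ) ≤ (∑ j, a j : ℕ) := by exact_mod_cast hge
      have hmpos : (0 : ℝ) < m := by positivity
      rw [show ∑ j, (a j : ℝ) / (m : ℝ) = (∑ j, (a j : ℝ)) / m from (Finset.sum_div _ _ _).symm]
      rw [le_div_iff₀ hmpos, one_mul]
      calc (m : ℝ) ≤ ((∑ j, a j : ℕ) : ℝ) := hmr
        _ = ∑ j, (a j : ℝ) := by push_cast; rfl
end

section
/- Let g ∈ GL_n(ℤ) have finite order m = 2k with k > 1, and suppose h = g^k is a reflection (eigenvalues 1 with multiplicity n−1 and −1 with multiplicity 1). Then the eigenvalues of g (with multiplicity) can be written as e^{2πi·a_j/(2k)} with integers 0 ≤ a_j < 2k such that a_j is even for j = 1,…,n−1 and a_n is odd, and for every integer l with 1 ≤ l < k one has {l·a_n/k} + Σ_{j=1}^{n−1} {l·a_j/(2k)} ≥ 1, where {x} denotes the fractional part of x. -/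
open Polynomial Matrix Complex in
noncomputable section

open Polynomial Matrix

lemma eval_charpoly {n : ℕ} (M : Matrix (Fin n) (Fin n) ℂ) (r : ℂ) :
    M.charpoly.eval r = (Matrix.scalar (Fin n) r - M).det := by
  exact Matrix.eval_charpoly M r

lemma algebraMap_eq_scalar {n : ℕ} (x : ℂ) :
    algebraMap ℂ (Matrix (Fin n) (Fin n) ℂ) x = Matrix.scalar (Fin n) x := rfl

lemma list_prod_swap {n : ℕ} (L : List ℂ) (f : Fin n → ℂ → ℂ) :
    (L.map (fun w => ∏ i, f i w)).prod = ∏ i, (L.map (f i)).prod := by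
  induction L with
  | nil => simp
  | cons a t ih => simp [ih, Finset.prod_mul_distrib]

lemma list_prod_const_mul (L : List ℂ) (c : ℂ) (f : ℂ → ℂ) :
    (L.map fun w => c * f w).prod = c ^ L.length * (L.map f).prod := by
  induction L with
  | nil => simp
  | cons a t ih => simp [ih]; ring

lemma charpoly_pow {n : ℕ} (A : Matrix (Fin n) (Fin n) ℂ) (d : Fin n → ℂ)
    (hd : A.charpoly = ∏ i, (X - C (d i))) (l : ℕ) (hl : l ≠ 0) :
    (A ^ l).charpoly = ∏ i, (X - C (d i ^ l)) := by
  have hdet : ∀ t : ℂ, (Matrix.scalar (Fin n) t - A).det = ∏ i, (t - d i) := by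
    intro t
    rw [← eval_charpoly, hd, eval_prod]
    simp
  apply Polynomial.funext
  intro x
  have hpm : (X ^ l - C x : ℂ[X]).Monic := monic_X_pow_sub_C x hl
  have hps : (X ^ l - C x : ℂ[X]).Splits :=
    IsAlgClosed.splits _
  obtain ⟨L, hLcoe⟩ : ∃ L : List ℂ, (X ^ l - C x : ℂ[X]).roots = ↑L :=
    ⟨_, (Multiset.coe_toList _).symm⟩
  have hLp : (X ^ l - C x : ℂ[X]) = (L.map fun w => X - C w).prod := by
    have := hps.eq_prod_roots_of_monic hpm
    rwa [hLcoe, Multiset.map_coe, Multiset.prod_coe] at this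
  have hLlen : L.length = l := by
    have h1 := splits_iff_card_roots.mp hps
    rw [hLcoe, Multiset.coe_card, natDegree_X_pow_sub_C] at h1
    exact h1
  have hscal : ∀ t : ℂ, t ^ l - x = (L.map fun w => t - w).prod := by
    intro t
    have h2 := congrArg (Polynomial.eval t) hLp
    rw [eval_sub, eval_pow, eval_X, eval_C, eval_list_prod, List.map_map] at h2
    simpa [Function.comp_def] using h2
  have hmat : A ^ l - Matrix.scalar (Fin n) x
      = (L.map fun w => A - Matrix.scalar (Fin n) w).prod := by
    have h2 := congrArg (Polynomial.aeval A) hLp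
    rw [map_sub, map_pow, aeval_X, aeval_C, algebraMap_eq_scalar] at h2
    rw [h2, map_list_prod (aeval A : ℂ[X] →ₐ[ℂ] Matrix (Fin n) (Fin n) ℂ), List.map_map]
    refine congrArg List.prod (List.map_congr_left fun w _ => ?_)
    simp [Function.comp_def, algebraMap_eq_scalar]
  have neg_det : ∀ M : Matrix (Fin n) (Fin n) ℂ, (-M).det = (-1 : ℂ) ^ n * M.det := by
    intro M
    rw [← neg_one_smul ℂ M, Matrix.det_smul, Fintype.card_fin]
  have det_list : ((L.map fun w => A - Matrix.scalar (Fin n) w).prod).det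
      = (L.map fun w => (A - Matrix.scalar (Fin n) w).det).prod := by
    have := map_list_prod (Matrix.detMonoidHom : Matrix (Fin n) (Fin n) ℂ →* ℂ)
      (L.map fun w => A - Matrix.scalar (Fin n) w)
    rw [List.map_map] at this
    simpa [Matrix.coe_detMonoidHom, Function.comp_def] using this
  have lhs_eq : (A ^ l).charpoly.eval x
      = (-1 : ℂ) ^ n * (L.map fun w => (-1 : ℂ) ^ n * ∏ i, (w - d i)).prod := by
    rw [_root_.eval_charpoly, (neg_sub _ _).symm.trans rfl, neg_det, hmat, det_list]
    congr 1
    refine congrArg List.prod (List.map_congr_left fun w _ => ?_)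
    rw [show A - Matrix.scalar (Fin n) w = -(Matrix.scalar (Fin n) w - A) from (neg_sub _ _).symm,
      neg_det, hdet w]
  have rhs_eq : (∏ i, (X - C (d i ^ l))).eval x
      = (-1 : ℂ) ^ n * (L.map fun w => (-1 : ℂ) ^ n * ∏ i, (w - d i)).prod := by
    rw [eval_prod]
    simp only [eval_sub, eval_X, eval_C]
    have key : ∀ i : Fin n, x - d i ^ l
        = (-1 : ℂ) * ((-1) ^ l * (L.map fun w => w - d i).prod) := by
      intro i
      have h6 := hscal (d i)
      have h5 : (L.map fun w => d i - w) = L.map fun w => (-1 : ℂ) * (w - d i) := by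
        simp only [List.map_inj_left]; intro w _; ring
      rw [h5, list_prod_const_mul, hLlen] at h6
      linear_combination (-1 : ℂ) * h6
    calc ∏ i, (x - d i ^ l)
        = ∏ i, ((-1 : ℂ) * ((-1) ^ l * (L.map fun w => w - d i).prod)) :=
          Finset.prod_congr rfl fun i _ => key i
      _ = ((-1 : ℂ) * (-1) ^ l) ^ n * ∏ i, (L.map fun w => w - d i).prod := by
          rw [show (fun i : Fin n => (-1 : ℂ) * ((-1) ^ l * (L.map fun w => w - d i).prod))
              = fun i : Fin n => ((-1 : ℂ) * (-1) ^ l) * (L.map fun w => w - d i).prod by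
            funext i; ring]
          rw [Finset.prod_mul_distrib, Finset.prod_const, Finset.card_univ, Fintype.card_fin]
      _ = (-1 : ℂ) ^ n * (L.map fun w => (-1 : ℂ) ^ n * ∏ i, (w - d i)).prod := by
          rw [← list_prod_swap, list_prod_const_mul, hLlen]
          ring
  rw [lhs_eq, rhs_eq]

lemma fract_eq_of_exp_eq {u v : ℝ}
    (h : Complex.exp (2 * Real.pi * Complex.I * u) = Complex.exp (2 * Real.pi * Complex.I * v)) :
    Int.fract u = Int.fract v := by
  rw [Complex.exp_eq_exp_iff_exists_int] at h
  obtain ⟨m, hm⟩ := h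
  have h2 : (2 * Real.pi * Complex.I : ℂ) ≠ 0 := by
    simp [Real.pi_ne_zero, Complex.I_ne_zero]
  have h3 : (u : ℂ) = (v : ℂ) + m := by
    apply mul_left_cancel₀ h2
    rw [hm]; ring
  have h4 : u = v + m := by exact_mod_cast h3
  rw [h4, Int.fract_add_intCast]

lemma fract_arg_exp (x : ℝ) :
    Int.fract ((Complex.exp (2 * Real.pi * Complex.I * x)).arg / (2 * Real.pi)) = Int.fract x := by
  set z := Complex.exp (2 * Real.pi * Complex.I * x) with hz
  have habs : ‖z‖ = 1 := by
    rw [hz, Complex.norm_exp]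
    norm_num
  have hkey : (2 * Real.pi * Complex.I * ((z.arg / (2 * Real.pi) : ℝ) : ℂ)) = z.arg * Complex.I := by
    have hπ : (Real.pi : ℂ) ≠ 0 := by exact_mod_cast Real.pi_ne_zero
    push_cast
    field_simp
  have hzeq : Complex.exp (2 * Real.pi * Complex.I * ((z.arg / (2 * Real.pi) : ℝ) : ℂ)) = z := by
    rw [hkey]
    have := Complex.norm_mul_exp_arg_mul_I z
    rwa [habs, Complex.ofReal_one, one_mul] at this
  exact fract_eq_of_exp_eq (hzeq.trans hz)

lemma exp_eq_one_iff_fract (x : ℝ) :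
    Complex.exp (2 * Real.pi * Complex.I * x) = 1 ↔ Int.fract x = 0 := by
  constructor
  · intro h
    have h1 : Complex.exp (2 * Real.pi * Complex.I * x)
        = Complex.exp (2 * Real.pi * Complex.I * ((0 : ℝ) : ℂ)) := by
      simpa using h
    simpa using fract_eq_of_exp_eq h1
  · intro h
    have hx : x = (⌊x⌋ : ℝ) := by
      rw [Int.fract] at h; linarith
    rw [hx]
    have h2 := Complex.exp_int_mul_two_pi_mul_I ⌊x⌋
    rw [← h2]
    congr 1
    push_cast
    ring

lemma conj_exp_real (x : ℝ) :
    (starRingEnd ℂ) (Complex.exp (2 * Real.pi * Complex.I * x))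
      = Complex.exp (2 * Real.pi * Complex.I * ((-x : ℝ) : ℂ)) := by
  rw [← Complex.exp_conj]
  congr 1
  simp only [_root_.map_mul, Complex.conj_I, Complex.conj_ofReal, map_ofNat]
  push_cast
  ring

lemma pow_eq_one_of_eigenvalues {n : ℕ} (A : Matrix (Fin n) (Fin n) ℂ) (d : Fin n → ℂ)
    (hd : A.charpoly = ∏ i, (X - C (d i))) (m : ℕ) (hm : m ≠ 0) (hA : A ^ m = 1)
    (s : ℕ) (hds : ∀ i, d i ^ s = 1) : A ^ s = 1 := by
  have haev : Polynomial.aeval A (X ^ m - C 1 : ℂ[X]) = 0 := by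
    simp [hA]
  have hdvd1 : minpoly ℂ A ∣ X ^ m - C 1 := minpoly.dvd ℂ A haev
  have hint : IsIntegral ℂ A := ⟨X ^ m - C 1, monic_X_pow_sub_C 1 hm, haev⟩
  have hsep : (X ^ m - C 1 : ℂ[X]).Separable :=
    Polynomial.separable_X_pow_sub_C 1 (by exact_mod_cast hm) one_ne_zero
  have hmpsep : (minpoly ℂ A).Separable := hsep.of_dvd hdvd1
  have hnodup : (minpoly ℂ A).roots.Nodup := Polynomial.nodup_roots hmpsep
  have hmon : (minpoly ℂ A).Monic := minpoly.monic hint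
  have hfac : minpoly ℂ A = ((minpoly ℂ A).roots.map fun r => X - C r).prod :=
    (IsAlgClosed.splits _).eq_prod_roots_of_monic hmon
  have hcroots : A.charpoly.roots = Multiset.map d Finset.univ.val := by
    rw [hd]
    rw [show (∏ i, (X - C (d i))) = ((Multiset.map d Finset.univ.val).map fun r => X - C r).prod by
      rw [Multiset.map_map, Finset.prod_eq_multiset_prod]; rfl]
    exact roots_multiset_prod_X_sub_C _
  have hroots_pow : ∀ r ∈ (minpoly ℂ A).roots, r ^ s = 1 := by
    intro r hr
    have h1 : r ∈ A.charpoly.roots := by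
      refine Multiset.mem_of_le (roots.le_of_dvd (A.charpoly_monic.ne_zero) ?_) hr
      exact A.minpoly_dvd_charpoly
    rw [hcroots] at h1
    obtain ⟨i, _, rfl⟩ := Multiset.mem_map.mp h1
    exact hds i
  have hval : (minpoly ℂ A).roots.toFinset.val = (minpoly ℂ A).roots := by
    rw [Multiset.toFinset_val, Multiset.dedup_eq_self.mpr hnodup]
  have hdvd2 : minpoly ℂ A ∣ X ^ s - C 1 := by
    rw [hfac]
    have heq : ((minpoly ℂ A).roots.map fun r => X - C r).prod
        = ∏ r ∈ (minpoly ℂ A).roots.toFinset, (X - C r) := by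
      rw [Finset.prod_eq_multiset_prod, hval]
    rw [heq]
    refine Finset.prod_dvd_of_coprime (fun r _ r' _ hne => ?_) (fun r hr => ?_)
    · exact (Polynomial.pairwise_coprime_X_sub_C (Function.injective_id) hne)
    · rw [Polynomial.dvd_iff_isRoot]
      have hr' : r ∈ (minpoly ℂ A).roots := Multiset.mem_toFinset.mp hr
      simp [Polynomial.IsRoot, hroots_pow r hr']
  obtain ⟨q, hq⟩ := hdvd2
  have : Polynomial.aeval A (X ^ s - C 1 : ℂ[X]) = 0 := by
    rw [hq, _root_.map_mul, minpoly.aeval, zero_mul]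
  rw [map_sub, map_pow, aeval_X, aeval_C, _root_.map_one, sub_eq_zero] at this
  exact this

lemma roots_prod_fin {n : ℕ} (e : Fin n → ℂ) :
    (∏ i, (X - C (e i))).roots = Multiset.map e Finset.univ.val := by
  rw [show (∏ i, (X - C (e i))) = ((Multiset.map e Finset.univ.val).map fun r => X - C r).prod by
    rw [Multiset.map_map, Finset.prod_eq_multiset_prod]; rfl]
  exact roots_multiset_prod_X_sub_C _

lemma exists_enum {n : ℕ} (s : Multiset ℂ) (h : Multiset.card s = n) :
    ∃ d : Fin n → ℂ, s = Multiset.map d Finset.univ.val := by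
  have hlen : s.toList.length = n := by rw [Multiset.length_toList, h]
  refine ⟨fun i => s.toList.get (Fin.cast hlen.symm i), ?_⟩
  rw [Fin.univ_val_map]
  conv_lhs => rw [← Multiset.coe_toList s]
  congr 1
  apply List.ext_get
  · simp [hlen]
  · intro i h1 h2
    simp [List.get_ofFn]

end

open Polynomial Matrix in
/-- **Lemma (toric_modified_RST).** Let `g ∈ GL_n(ℤ)` have finite order `m = 2k`,
`k > 1`, and suppose `h = g^k` is a reflection (eigenvalues `1` with multiplicity
`n−1` and `−1` with multiplicity `1`).  Then the eigenvalues of `g` can be written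
as `e^{2πi·a_j/(2k)}` with `0 ≤ a_j < 2k`, all even except for exactly one odd
exponent `a_{j₀}`, and for every `1 ≤ l < k` one has
`{l·a_{j₀}/k} + ∑_{j ≠ j₀} {l·a_j/(2k)} ≥ 1`. -/
theorem stmt_6 (n k : ℕ) (hk : 1 < k) (g : Matrix (Fin n) (Fin n) ℤ)
    (hg : IsUnit g.det) (hord : orderOf g = 2 * k)
    (hrefl : (((g ^ k).map (Int.cast : ℤ → ℂ)).charpoly).roots =
      Multiset.replicate (n - 1) 1 + {(-1 : ℂ)}) :
    ∃ (a : Fin n → ℕ) (j₀ : Fin n),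
      (∀ j, a j < 2 * k) ∧
      ((g.map (Int.cast : ℤ → ℂ)).charpoly).roots =
        Multiset.map
          (fun j => Complex.exp (2 * (Real.pi : ℂ) * Complex.I * (a j : ℂ) / ((2 * k : ℕ) : ℂ)))
          Finset.univ.val ∧
      (∀ j, j ≠ j₀ → Even (a j)) ∧ Odd (a j₀) ∧
      ∀ l : ℕ, 1 ≤ l → l < k →
        (1 : ℝ) ≤ Int.fract ((l * a j₀ : ℝ) / (k : ℝ)) +
          ∑ j ∈ Finset.univ.erase j₀, Int.fract ((l * a j : ℝ) / ((2 * k : ℕ) : ℝ)) := by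
  classical
  have hkne : k ≠ 0 := by omega
  haveI : NeZero k := ⟨hkne⟩
  have h2kne : 2 * k ≠ 0 := by omega
  set A : Matrix (Fin n) (Fin n) ℂ := g.map (Int.cast : ℤ → ℂ) with hA
  have hmap : ∀ t : ℕ, (g ^ t).map (Int.cast : ℤ → ℂ) = A ^ t := by
    intro t
    have hh : ∀ M : Matrix (Fin n) (Fin n) ℤ,
        M.map (Int.cast : ℤ → ℂ) = (Int.castRingHom ℂ).mapMatrix M := fun _ => rfl
    rw [hh, hA, hh, _root_.map_pow]
  have hg2k : g ^ (2 * k) = 1 := by rw [← hord]; exact pow_orderOf_eq_one g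
  have hA2k : A ^ (2 * k) = 1 := by
    rw [← hmap, hg2k]
    exact Matrix.map_one _ (by simp) (by simp)
  have hginj : ∀ t : ℕ, A ^ t = 1 → g ^ t = 1 := by
    intro t ht
    apply Matrix.map_injective (f := (Int.cast : ℤ → ℂ)) (fun a b hab => by exact_mod_cast hab)
    show (g ^ t).map (Int.cast : ℤ → ℂ) = (1 : Matrix (Fin n) (Fin n) ℤ).map (Int.cast : ℤ → ℂ)
    rw [hmap t, ht]
    exact (Matrix.map_one _ (by simp) (by simp)).symm
  have hsplits : A.charpoly.Splits := IsAlgClosed.splits _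
  have hcard : Multiset.card A.charpoly.roots = n := by
    rw [splits_iff_card_roots.mp hsplits, Matrix.charpoly_natDegree_eq_dim, Fintype.card_fin]
  obtain ⟨d, hroots⟩ := exists_enum A.charpoly.roots hcard
  have hchar : A.charpoly = ∏ i, (X - C (d i)) := by
    have h1 := hsplits.eq_prod_roots_of_monic A.charpoly_monic
    rw [hroots, Multiset.map_map] at h1
    rw [h1, Finset.prod_eq_multiset_prod]
    rfl
  -- conjugation symmetry of roots
  have hpconj : A.charpoly.map (starRingEnd ℂ) = A.charpoly := by
    have hAc : A.charpoly = g.charpoly.map (Int.castRingHom ℂ) := by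
      rw [hA]
      exact Matrix.charpoly_map g (Int.castRingHom ℂ)
    rw [hAc, Polynomial.map_map]
    congr 1
    exact RingHom.ext_int _ _
  have hconj : Multiset.map (starRingEnd ℂ) A.charpoly.roots = A.charpoly.roots := by
    have h1 := hsplits.roots_map (starRingEnd ℂ)
    rw [hpconj] at h1
    exact h1.symm
  -- k-th powers of roots
  have hcharK := charpoly_pow A d hchar k hkne
  have hrootsK : (A ^ k).charpoly.roots = Multiset.map (fun i => d i ^ k) Finset.univ.val := by
    rw [hcharK]; exact roots_prod_fin _
  rw [hmap k] at hrefl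
  have hrefl' : Multiset.map (fun i => d i ^ k) Finset.univ.val
      = Multiset.replicate (n - 1) 1 + {(-1 : ℂ)} := hrootsK.symm.trans hrefl
  -- locating the unique -1 eigenvalue of g^k
  have hfilter : (Finset.univ.filter (fun i => (-1 : ℂ) = d i ^ k)).card = 1 := by
    have h1 := congrArg (Multiset.count (-1 : ℂ)) hrefl'
    rw [Multiset.count_map, Multiset.count_add, Multiset.count_replicate,
      Multiset.count_singleton] at h1
    norm_num at h1
    rw [Finset.card_def, Finset.filter_val]
    convert h1 using 2
  obtain ⟨j₀, hj₀f⟩ := Finset.card_eq_one.mp hfilter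
  have hj₀ : d j₀ ^ k = -1 := by
    have h1 : j₀ ∈ Finset.univ.filter (fun i => (-1 : ℂ) = d i ^ k) := by
      rw [hj₀f]; exact Finset.mem_singleton_self j₀
    exact (Finset.mem_filter.mp h1).2.symm
  have hmem1 : ∀ j : Fin n, d j ^ k = 1 ∨ d j ^ k = -1 := by
    intro j
    have h1 : d j ^ k ∈ Multiset.replicate (n - 1) (1 : ℂ) + {(-1 : ℂ)} := by
      rw [← hrefl']
      exact Multiset.mem_map.mpr ⟨j, by simp, rfl⟩
    rcases Multiset.mem_add.mp h1 with h | h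
    · left; exact Multiset.eq_of_mem_replicate h
    · right; simpa using h
  have hother : ∀ j, j ≠ j₀ → d j ^ k = 1 := by
    intro j hne
    rcases hmem1 j with h | h
    · exact h
    · exfalso; apply hne
      have h2 : j ∈ Finset.univ.filter (fun i => (-1 : ℂ) = d i ^ k) :=
        Finset.mem_filter.mpr ⟨Finset.mem_univ j, h.symm⟩
      rw [hj₀f] at h2
      exact Finset.mem_singleton.mp h2
  -- d j₀ is real, equal to -1, and k is odd
  have hsingle : A.charpoly.roots.filter (fun z => z ^ k = -1) = {d j₀} := by
    have hcard1 : Multiset.card (A.charpoly.roots.filter (fun z => z ^ k = -1)) = 1 := by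
      rw [hroots, Multiset.filter_map, Multiset.card_map]
      have h2 : (Finset.univ.filter (fun i => d i ^ k = -1)).card = 1 := by
        rw [← hfilter]
        congr 1
        ext i
        simp [eq_comm]
      rw [Finset.card_def, Finset.filter_val] at h2
      convert h2 using 2
      rfl
    obtain ⟨z₀, hz₀⟩ := Multiset.card_eq_one.mp hcard1
    have hdj₀mem : d j₀ ∈ A.charpoly.roots.filter (fun z => z ^ k = -1) := by
      rw [Multiset.mem_filter]
      refine ⟨?_, hj₀⟩
      rw [hroots]
      exact Multiset.mem_map.mpr ⟨j₀, by simp, rfl⟩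
    rw [hz₀] at hdj₀mem ⊢
    rw [Multiset.mem_singleton] at hdj₀mem
    rw [hdj₀mem]
  have hconjd : (starRingEnd ℂ) (d j₀) = d j₀ := by
    have h1 : Multiset.map (starRingEnd ℂ) (A.charpoly.roots.filter (fun z => z ^ k = -1))
        = A.charpoly.roots.filter (fun z => z ^ k = -1) := by
      conv_rhs => rw [← hconj]
      rw [Multiset.filter_map]
      congr 1
      apply Multiset.filter_congr
      intro z _
      simp only [Function.comp_apply]
      constructor
      · intro h
        rw [← _root_.map_pow, h]
        simp
      · intro h
        have h2 := congrArg (starRingEnd ℂ) h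
        rw [← _root_.map_pow, Complex.conj_conj] at h2
        simpa using h2
    rw [hsingle] at h1
    simpa using h1
  obtain ⟨r, hr⟩ := Complex.conj_eq_iff_real.mp hconjd
  have hrk : r ^ k = -1 := by
    have h1 := hj₀
    rw [hr] at h1
    exact_mod_cast h1
  have hrneg : r < 0 := by
    by_contra hcon; push_neg at hcon
    have h1 : (0 : ℝ) ≤ r ^ k := pow_nonneg hcon k
    rw [hrk] at h1; linarith
  have hr2k : (r ^ 2) ^ k = 1 := by
    rw [← pow_mul, mul_comm, pow_mul, hrk]; norm_num
  have hr2 : r ^ 2 = 1 := by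
    rcases lt_trichotomy (r ^ 2) 1 with h | h | h
    · exfalso
      have h1 : (r ^ 2) ^ k < 1 := pow_lt_one₀ (by positivity) h hkne
      rw [hr2k] at h1; linarith
    · exact h
    · exfalso
      have h1 : 1 < (r ^ 2) ^ k := one_lt_pow₀ h hkne
      rw [hr2k] at h1; linarith
  have hrm1 : r = -1 := by
    have h1 : (r + 1) * (r - 1) = 0 := by nlinarith
    rcases mul_eq_zero.mp h1 with h | h
    · linarith
    · linarith
  have hdj₀ : d j₀ = -1 := by
    rw [hr, hrm1]; norm_num
  have hkodd : Odd k := by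
    rcases Nat.even_or_odd k with he | ho
    · exfalso
      rw [hrm1] at hrk
      rw [he.neg_one_pow] at hrk
      linarith
    · exact ho
  -- choose exponents b j with d j = ζ_k ^ (b j) for j ≠ j₀
  have hprim := Complex.isPrimitiveRoot_exp k hkne
  have hbex : ∀ j : Fin n, ∃ b : ℕ, j ≠ j₀ →
      (b < k ∧ Complex.exp (2 * Real.pi * Complex.I / k) ^ b = d j) := by
    intro j
    by_cases h : j = j₀
    · exact ⟨0, fun h' => absurd h h'⟩
    · obtain ⟨b, hb1, hb2⟩ := hprim.eq_pow_of_pow_eq_one (hother j h)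
      exact ⟨b, fun _ => ⟨hb1, hb2⟩⟩
  choose b hbspec using hbex
  set a : Fin n → ℕ := fun j => if j = j₀ then k else 2 * b j with ha_def
  have haj₀ : a j₀ = k := by rw [ha_def]; simp
  have hane : ∀ j, j ≠ j₀ → a j = 2 * b j := by
    intro j h; rw [ha_def]; simp [h]
  have hkC : ((k : ℕ) : ℂ) ≠ 0 := by exact_mod_cast hkne
  have hdexp : ∀ j, d j
      = Complex.exp (2 * (Real.pi : ℂ) * Complex.I * (a j : ℂ) / ((2 * k : ℕ) : ℂ)) := by
    intro j
    by_cases h : j = j₀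
    · rw [h, hdj₀, haj₀]
      have harg : 2 * (Real.pi : ℂ) * Complex.I * (k : ℂ) / ((2 * k : ℕ) : ℂ)
          = Real.pi * Complex.I := by
        push_cast
        field_simp
      rw [harg, Complex.exp_pi_mul_I]
    · rw [← (hbspec j h).2, ← Complex.exp_nat_mul, hane j h]
      congr 1
      push_cast
      field_simp
  refine ⟨a, j₀, ?_, ?_, ?_, ?_, ?_⟩
  · intro j
    by_cases h : j = j₀
    · rw [h, haj₀]; omega
    · rw [hane j h]
      have := (hbspec j h).1
      omega
  · rw [hroots]
    exact Multiset.map_congr rfl fun j _ => hdexp j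
  · intro j hne
    rw [hane j hne]
    exact even_two_mul _
  · rw [haj₀]; exact hkodd
  -- the fractional-part inequality
  intro l hl1 hlk
  have hlne : l ≠ 0 := by omega
  have hfract0 : Int.fract ((l * a j₀ : ℝ) / (k : ℝ)) = 0 := by
    rw [haj₀]
    rw [show ((l : ℝ) * (k : ℕ)) / (k : ℝ) = ((l : ℕ) : ℝ) by
      field_simp]
    exact Int.fract_natCast l
  rw [hfract0, zero_add]
  by_contra hS
  push_neg at hS
  have hkR : (k : ℝ) ≠ 0 := by exact_mod_cast hkne
  have hsum_eq : ∑ j ∈ Finset.univ.erase j₀, Int.fract ((l * a j : ℝ) / ((2 * k : ℕ) : ℝ))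
      = ∑ j ∈ Finset.univ.erase j₀, Int.fract ((l * b j : ℝ) / (k : ℝ)) := by
    refine Finset.sum_congr rfl fun j hj => ?_
    have hne := (Finset.mem_erase.mp hj).1
    rw [hane j hne]
    congr 1
    push_cast
    field_simp
  set F : ℂ → ℝ := fun z => Int.fract (z.arg / (2 * Real.pi)) with hF_def
  have hdl_exp : ∀ j, j ≠ j₀ → d j ^ l
      = Complex.exp (2 * Real.pi * Complex.I * (((l * b j : ℝ) / k : ℝ) : ℂ)) := by
    intro j h
    rw [← (hbspec j h).2, ← pow_mul, ← Complex.exp_nat_mul]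
    congr 1
    push_cast
    field_simp
  have hF : ∀ j, j ≠ j₀ → F (d j ^ l) = Int.fract ((l * b j : ℝ) / (k : ℝ)) := by
    intro j h
    rw [hF_def, hdl_exp j h]
    exact fract_arg_exp _
  set M' : Multiset ℂ := (Finset.univ.erase j₀).val.map (fun j => d j ^ l) with hM'
  have hSsum : ∑ j ∈ Finset.univ.erase j₀, Int.fract ((l * b j : ℝ) / (k : ℝ))
      = (M'.map F).sum := by
    rw [hM', Multiset.map_map, Finset.sum_eq_multiset_sum]
    congr 1
    apply Multiset.map_congr rfl
    intro j hj
    have hne : j ≠ j₀ := (Finset.mem_erase.mp (Finset.mem_val.mp hj)).1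
    exact (hF j hne).symm
  have key : ∀ j ∈ Finset.univ.erase j₀, (d j ^ l) ^ 2 = 1 := by
    by_contra hkey
    push_neg at hkey
    obtain ⟨j₁, hj₁mem, hj₁⟩ := hkey
    have hne₁ : j₁ ≠ j₀ := (Finset.mem_erase.mp hj₁mem).1
    set x : ℝ := (l * b j₁ : ℝ) / (k : ℝ) with hx_def
    set z : ℂ := d j₁ ^ l with hz_def
    have hzx : z = Complex.exp (2 * Real.pi * Complex.I * (x : ℂ)) := hdl_exp j₁ hne₁
    have hzne1 : z ≠ 1 := by
      intro h; apply hj₁; rw [h]; norm_num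
    have habs : ‖z‖ = 1 := by
      rw [hzx, Complex.norm_exp]
      norm_num
    have hconjz : (starRingEnd ℂ) z ≠ z := by
      intro hcz
      apply hj₁
      have h1 : z * (starRingEnd ℂ) z = (Complex.normSq z : ℂ) := Complex.mul_conj z
      rw [hcz] at h1
      have h2 : Complex.normSq z = 1 := by
        rw [Complex.normSq_eq_norm_sq, habs]; norm_num
      rw [pow_two, h1, h2]
      norm_num
    have hMconj : Multiset.map (starRingEnd ℂ) ((Finset.univ.erase j₀).val.map d)
        = (Finset.univ.erase j₀).val.map d := by
      have hcons : A.charpoly.roots = d j₀ ::ₘ ((Finset.univ.erase j₀).val.map d) := by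
        rw [hroots, Finset.erase_val, ← Multiset.map_cons,
          Multiset.cons_erase (Finset.mem_val.mpr (Finset.mem_univ j₀))]
      have h1 := hconj
      rw [hcons, Multiset.map_cons, hconjd] at h1
      exact (Multiset.cons_inj_right _).mp h1
    have hM'conj : Multiset.map (starRingEnd ℂ) M' = M' := by
      rw [hM', show (Finset.univ.erase j₀).val.map (fun j => d j ^ l)
          = ((Finset.univ.erase j₀).val.map d).map (· ^ l) from (Multiset.map_map _ _ _).symm,
        Multiset.map_map,
        show ((starRingEnd ℂ) ∘ (· ^ l)) = ((· ^ l) ∘ (starRingEnd ℂ)) from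
          funext fun w => by simp [Function.comp_apply, _root_.map_pow],
        ← Multiset.map_map, hMconj]
    have hzmem : z ∈ M' := by
      rw [hM', hz_def]
      exact Multiset.mem_map_of_mem _ (Finset.mem_val.mpr hj₁mem)
    have hczmem : (starRingEnd ℂ) z ∈ M' := by
      rw [← hM'conj]
      exact Multiset.mem_map_of_mem _ hzmem
    obtain ⟨M₂, hM₂⟩ := Multiset.exists_cons_of_mem hzmem
    have hczM₂ : (starRingEnd ℂ) z ∈ M₂ := by
      rw [hM₂] at hczmem
      rcases Multiset.mem_cons.mp hczmem with h | h
      · exact absurd h hconjz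
      · exact h
    obtain ⟨M₃, hM₃⟩ := Multiset.exists_cons_of_mem hczM₂
    have hFz : F z = Int.fract x := by rw [hF_def, hzx]; exact fract_arg_exp x
    have hfxne : Int.fract x ≠ 0 := by
      intro h0
      exact hzne1 (by rw [hzx]; exact (exp_eq_one_iff_fract x).mpr h0)
    have hFcz : F ((starRingEnd ℂ) z) = Int.fract (-x) := by
      rw [hF_def, hzx, conj_exp_real]
      exact fract_arg_exp (-x)
    have hsum_ge : (1 : ℝ) ≤ (M'.map F).sum := by
      rw [hM₂, hM₃, Multiset.map_cons, Multiset.sum_cons, Multiset.map_cons, Multiset.sum_cons]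
      have h3 : 0 ≤ (M₃.map F).sum := by
        apply Multiset.sum_nonneg
        intro t ht
        obtain ⟨w, _, rfl⟩ := Multiset.mem_map.mp ht
        exact Int.fract_nonneg _
      have h4 : F z + F ((starRingEnd ℂ) z) = 1 := by
        rw [hFz, hFcz, Int.fract_neg hfxne]; ring
      linarith
    rw [hsum_eq, hSsum] at hS
    linarith
  have hall : ∀ i, d i ^ (2 * l) = 1 := by
    intro i
    by_cases h : i = j₀
    · rw [h, hdj₀, pow_mul]; norm_num
    · rw [mul_comm, pow_mul]
      exact key i (Finset.mem_erase.mpr ⟨h, Finset.mem_univ i⟩)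
  have hA2l : A ^ (2 * l) = 1 :=
    pow_eq_one_of_eigenvalues A d hchar (2 * k) h2kne hA2k (2 * l) hall
  have hg2l := hginj _ hA2l
  have hdvd := orderOf_dvd_of_pow_eq_one hg2l
  rw [hord] at hdvd
  have hkl : k ∣ l := (Nat.mul_dvd_mul_iff_left (by norm_num : 0 < 2)).mp hdvd
  have := Nat.le_of_dvd (by omega) hkl
  omega
end

section
/- Let L be a lattice of signature (2,n) and let E ⊂ L be a primitive sublattice of rank 2 that is totally isotropic, i.e. (x,y) = 0 for all x,y ∈ E; set E^⊥ = {x ∈ L : (x,y) = 0 for all y ∈ E}. Then there exist a ℤ-basis e'_1,…,e'_{n+2} of L and positive integers δ and e such that: e'_1, e'_2 is a ℤ-basis of E; e'_1,…,e'_n is a ℤ-basis of E^⊥; and the Gram matrix ((e'_i,e'_j)), with indices grouped as {1,2}, {3,…,n}, {n+1,n+2}, has block form [[0,0,A],[0,B,C],[Aᵀ,Cᵀ,D]] with A = diag(δ, δe). -/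
open Module Submodule

theorem Set.range_fin_two {α : Type*} (f : Fin 2 → α) : Set.range f = {f 0, f 1} := by
  ext
  simp [Fin.exists_fin_two, eq_comm]

theorem Module.Basis.span_range_subtype_comp {R M ι : Type*} [Semiring R] [AddCommMonoid M]
    [Module R M] {P : Submodule R M} (b : Basis ι R P) :
    span R (Set.range (P.subtype ∘ b)) = P := by
  rw [Set.range_comp, ← map_span, b.span_eq, Submodule.map_top, range_subtype]

section Stacking

variable {R M N ι κ : Type*} [CommRing R] [AddCommGroup M] [Module R M] [AddCommGroup N]
  [Module R N]

theorem exists_basis_sum_elim_of_ker {φ : M →ₗ[R] N} {v : ι → M} (hv : LinearIndependent R v)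
    (hvK : span R (Set.range v) = LinearMap.ker φ) {w : κ → M}
    (hw : LinearIndependent R (φ ∘ w)) (hwR : LinearMap.range φ ≤ span R (Set.range (φ ∘ w))) :
    ∃ b : Basis (ι ⊕ κ) R M, ⇑b = Sum.elim v w := by
  refine ⟨Basis.mk (hv.sum_type hw.of_comp ?_) ?_, Basis.coe_mk _ _⟩
  · rw [hvK]
    exact (range_ker_disjoint hw).symm
  · intro x _
    obtain ⟨y, hy, hxy⟩ : φ x ∈ (span R (Set.range w)).map φ := by
      rw [map_span, ← Set.range_comp]
      exact hwR ⟨x, rfl⟩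
    have hxy' : x - y ∈ span R (Set.range v) := by
      rw [hvK, LinearMap.mem_ker, map_sub, hxy, sub_self]
    rw [Set.Sum.elim_range, span_union, ← sub_add_cancel x y]
    exact add_mem (mem_sup_left hxy') (mem_sup_right hy)

end Stacking

theorem Module.Basis.exists_reindex_fin_blocks {R M : Type*} [Semiring R] [AddCommMonoid M]
    [Module R M] {m n : ℕ} (b : Basis ((Fin 2 ⊕ Fin m) ⊕ Fin 2) R M) (h : 2 + m = n) :
    ∃ e : Basis (Fin (n + 2)) R M, e 0 = b (.inl (.inl 0)) ∧ e 1 = b (.inl (.inl 1)) ∧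
      e ⟨n, by omega⟩ = b (.inr 0) ∧ e ⟨n + 1, by omega⟩ = b (.inr 1) ∧
      e '' {i | (i : ℕ) < n} = Set.range (b ∘ Sum.inl) := by
  subst h
  let σ : (Fin 2 ⊕ Fin m) ⊕ Fin 2 ≃ Fin (2 + m + 2) :=
    (Equiv.sumCongr finSumFinEquiv (Equiv.refl _)).trans finSumFinEquiv
  have hσ : σ ⁻¹' {i | (i : ℕ) < 2 + m} = Set.range Sum.inl := by
    ext ((i | j) | j) <;> simp [σ]
    omega
  have he : ∀ x, b.reindex σ (σ x) = b x := by simp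
  refine ⟨b.reindex σ, he (.inl (.inl 0)), he (.inl (.inl 1)), he (.inr 0), he (.inr 1), ?_⟩
  rw [Basis.coe_reindex, Set.image_comp, Equiv.image_symm_eq_preimage, hσ, Set.range_comp]

section PID

variable {R M : Type*} [CommRing R] [IsDomain R] [AddCommGroup M] [Module R M]

theorem Submodule.isTorsionFree_quotient {P : Submodule R M}
    (hP : ∀ (x : M) (c : R), c ≠ 0 → c • x ∈ P → x ∈ P) : IsTorsionFree R (M ⧸ P) := by
  refine isTorsionFree_iff_smul_eq_zero.2 fun c q hcq => or_iff_not_imp_left.2 fun hc => ?_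
  obtain ⟨x, rfl⟩ := P.mkQ_surjective q
  rw [← map_smul, mkQ_apply, Quotient.mk_eq_zero] at hcq
  rw [mkQ_apply, Quotient.mk_eq_zero]
  exact hP x c hc hcq

variable [IsPrincipalIdealRing R]

theorem Submodule.exists_basis_extend_of_le [Module.Finite R M] {P Q : Submodule R M} (hPQ : P ≤ Q)
    [IsTorsionFree R (M ⧸ P)] {ι : Type*} (bP : Basis ι R P) :
    ∃ (m : ℕ) (b : Basis (ι ⊕ Fin m) R Q), ∀ i, (b (Sum.inl i) : M) = bP i := by
  set φ : Q →ₗ[R] M ⧸ P := P.mkQ ∘ₗ Q.subtype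
  obtain ⟨m, bR⟩ := Module.basisOfFiniteTypeTorsionFree' (R := R) (M := LinearMap.range φ)
  choose w hw using fun k => φ.surjective_rangeRestrict (bR k)
  have hφw : φ ∘ w = (LinearMap.range φ).subtype ∘ bR :=
    funext fun k => congrArg Subtype.val (hw k)
  obtain ⟨b, hb⟩ := exists_basis_sum_elim_of_ker (φ := φ) (w := w)
    (bP.linearIndependent.map' _ (ker_inclusion P Q hPQ))
    (by rw [Set.range_comp, ← map_span, bP.span_eq, Submodule.map_top, range_inclusion,
      LinearMap.ker_comp, ker_mkQ])
    (hφw ▸ bR.linearIndependent.map' _ (ker_subtype _))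
    (by rw [hφw, bR.span_range_subtype_comp])
  exact ⟨m, b, fun i => by simp [hb]⟩

theorem Submodule.finrank_eq_of_dualCoannihilator_eq_bot [Module.Free R M] [Module.Finite R M]
    {H : Submodule R (Dual R M)} (hH : H.dualCoannihilator = ⊥) :
    finrank R H = finrank R (Dual R M) := by
  obtain ⟨k, snf⟩ := H.smithNormalForm (Module.Free.chooseBasis R (Dual R M))
  rw [finrank_eq_card_basis snf.bN, finrank_eq_card_basis snf.bM, Fintype.card_fin]
  refine le_antisymm (by simpa using Fintype.card_le_of_embedding snf.f) (not_lt.1 fun hk => ?_)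
  obtain ⟨i, hi⟩ : ∃ i, i ∉ Set.range snf.f := by
    by_contra! h
    exact hk.not_ge (by simpa using Fintype.card_le_of_surjective _ h)
  -- a coordinate function on `Dual R M` missed by `snf.f` kills `H`, so it is evaluation at an
  -- element of the coannihilator, which is `0`
  have hmem : (evalEquiv R M).symm (snf.bM.coord i) ∈ H.dualCoannihilator :=
    (mem_dualCoannihilator _).2 fun φ hφ => by
      simpa using snf.le_ker_coord_of_notMem_range hi hφ
  rw [hH, mem_bot, LinearEquiv.map_eq_zero_iff] at hmem
  simpa using congr($hmem (snf.bM i))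

end PID

section Dual

variable {R M : Type*} [CommRing R] [AddCommGroup M] [Module R M]

theorem Module.Basis.exists_coord_eq [IsReflexive R M] {ι : Type*} [Finite ι] [DecidableEq ι]
    (c : Basis ι R (Dual R M)) : ∃ e : Basis ι R M, ∀ i, e.coord i = c i := by
  let e := c.dualBasis.map (evalEquiv R M).symm
  refine ⟨e, fun i => e.ext fun j => ?_⟩
  have h : c i (e j) = c.dualBasis j (c i) := by
    rw [← Dual.eval_apply, ← evalEquiv_apply, Basis.map_apply, LinearEquiv.apply_symm_apply]
  rw [h, Basis.dualBasis_apply_self, Basis.coord_apply, Basis.repr_self, Finsupp.single_apply]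
  exact if_congr eq_comm rfl rfl

theorem Module.Basis.linearIndependent_smul_coord [NoZeroDivisors R] (e : Basis (Fin 2) R M)
    {r s : R} (hr : r ≠ 0) (hs : s ≠ 0) : LinearIndependent R ![r • e.coord 0, s • e.coord 1] := by
  refine LinearIndependent.pair_iff.2 fun a b hab => ⟨?_, ?_⟩
  · simpa [hr] using congr($hab (e 0))
  · simpa [hs] using congr($hab (e 1))

theorem Module.Basis.exists_span_pair_smul_eq (w : Basis (Fin 2) R M) (g : R) {a₀ a₁ : R}
    (h : IsCoprime a₀ a₁) : ∃ c : Basis (Fin 2) R M,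
      span R {(g * a₀) • w 0, (g * a₁) • w 1} = span R {g • c 0, (g * (a₀ * a₁)) • c 1} := by
  obtain ⟨U, V, hUV⟩ := h
  let P : Matrix (Fin 2) (Fin 2) R := !![a₀, -V; a₁, U]
  have hP : P.det = 1 := by
    rw [Matrix.det_fin_two_of]
    linear_combination hUV
  let c := w.map (Matrix.toLinearEquiv w P (hP ▸ isUnit_one))
  have hc₀ : c 0 = a₀ • w 0 + a₁ • w 1 := by simp [c, Matrix.toLinearEquiv, Matrix.toLin_self, P]
  have hc₁ : c 1 = (-V) • w 0 + U • w 1 := by simp [c, Matrix.toLinearEquiv, Matrix.toLin_self, P]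
  refine ⟨c, le_antisymm (span_le.2 ?_) (span_le.2 ?_)⟩ <;> rintro x (rfl | rfl) <;>
    simp only [SetLike.mem_coe, mem_span_pair, hc₀, hc₁]
  · exact ⟨a₀ * U, -1, by linear_combination (norm := module) (g * a₀) • hUV • w 0⟩
  · exact ⟨a₁ * V, 1, by linear_combination (norm := module) (g * a₁) • hUV • w 1⟩
  · exact ⟨1, 1, by module⟩
  · exact ⟨-(a₁ * V), a₀ * U, by module⟩

end Dual

theorem Submodule.span_pair_abs_smul {M : Type*} [AddCommGroup M] [Module ℤ M] (x y : M) (k : ℤ) :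
    span ℤ {x, |k| • y} = span ℤ {x, k • y} := by
  rcases abs_choice k with h | h <;> simp [h, span_insert x, ← Set.neg_singleton]

theorem Submodule.exists_basis_eq_span_smul_coord {E : Type*} [AddCommGroup E] [Module ℤ E]
    [Module.Free ℤ E] [Module.Finite ℤ E] (hE : finrank ℤ E = 2) {H : Submodule ℤ (Dual ℤ E)}
    (hH : H.dualCoannihilator = ⊥) : ∃ (e : Basis (Fin 2) ℤ E) (δ k : ℤ), 0 < δ ∧ 0 < k ∧
      H = span ℤ {δ • e.coord 0, (δ * k) • e.coord 1} := by
  obtain ⟨b, a, bH, hbH⟩ := H.exists_smith_normal_form_of_rank_eq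
    (finBasisOfFinrankEq ℤ E hE).dualBasis (finrank_eq_of_dualCoannihilator_eq_bot hH)
  have ha : ∀ i, a i ≠ 0 := fun i h => bH.ne_zero i (Subtype.ext (by simp [hbH, h]))
  have hspan : H = span ℤ {a 0 • b 0, a 1 • b 1} := by
    conv_lhs => rw [← bH.span_range_subtype_comp, Set.range_fin_two]
    simp [hbH]
  obtain ⟨g, a₀, a₁, hg, hcop, h₀, h₁⟩ :=
    Int.exists_gcd_one' (Int.gcd_pos_of_ne_zero_left (a 1) (ha 0))
  obtain ⟨c, hc⟩ := b.exists_span_pair_smul_eq (g : ℤ) (Int.isCoprime_iff_gcd_eq_one.2 hcop)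
  obtain ⟨e, he⟩ := c.exists_coord_eq
  have hk : a₀ * a₁ ≠ 0 :=
    mul_ne_zero (left_ne_zero_of_mul (h₀ ▸ ha 0)) (left_ne_zero_of_mul (h₁ ▸ ha 1))
  refine ⟨e, g, |a₀ * a₁|, by exact_mod_cast hg, abs_pos.2 hk, ?_⟩
  rw [hspan, h₀, h₁, mul_comm a₀, mul_comm a₁, hc, he, he]
  simp only [mul_comm (g : ℤ), mul_smul, span_pair_abs_smul]

namespace A0607339

variable {ι : Type} [Fintype ι] {G : Matrix ι ι ℤ}

theorem bZ_comm (hsym : G.IsSymm) (x y : ι → ℤ) : bZ G x y = bZ G y x := by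
  rw [bZ, Matrix.dotProduct_mulVec, ← Matrix.mulVec_transpose, hsym.eq, dotProduct_comm, bZ]

variable [DecidableEq ι]

variable (G) in
noncomputable def restrictPairing (E : Submodule ℤ (ι → ℤ)) : (ι → ℤ) →ₗ[ℤ] Dual ℤ E :=
  (Matrix.toLinearMap₂' ℤ G).compl₂ E.subtype

theorem restrictPairing_apply {E : Submodule ℤ (ι → ℤ)} (x : ι → ℤ) (y : E) :
    restrictPairing G E x y = bZ G x y :=
  Matrix.toLinearMap₂'_apply' G x y

theorem mem_ker_restrictPairing {E : Submodule ℤ (ι → ℤ)} {x : ι → ℤ} :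
    x ∈ LinearMap.ker (restrictPairing G E) ↔ ∀ y ∈ E, bZ G x y = 0 := by
  simp only [LinearMap.mem_ker, LinearMap.ext_iff, restrictPairing_apply, LinearMap.zero_apply,
    Subtype.forall]

theorem dualCoannihilator_range_restrictPairing (hdet : G.det ≠ 0) (E : Submodule ℤ (ι → ℤ)) :
    (LinearMap.range (restrictPairing G E)).dualCoannihilator = ⊥ := by
  refine eq_bot_iff.2 fun y hy => (mem_bot ℤ).2 (Subtype.ext ?_)
  refine Matrix.eq_zero_of_mulVec_eq_zero hdet (funext fun i => ?_)
  have hy' := (mem_dualCoannihilator y).1 hy _ ⟨Pi.single i 1, rfl⟩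
  rwa [restrictPairing_apply, bZ, single_dotProduct, one_mul] at hy'

theorem exists_adapted_basis (hdet : G.det ≠ 0) {E : Submodule ℤ (ι → ℤ)}
    (hprim : ∀ (x : ι → ℤ) (c : ℤ), c ≠ 0 → c • x ∈ E → x ∈ E) (hrank : finrank ℤ E = 2)
    (hiso : ∀ x ∈ E, ∀ y ∈ E, bZ G x y = 0) :
    ∃ (m : ℕ) (b : Basis ((Fin 2 ⊕ Fin m) ⊕ Fin 2) ℤ (ι → ℤ)) (δ k : ℤ), 0 < δ ∧ 0 < k ∧
      E = span ℤ {b (.inl (.inl 0)), b (.inl (.inl 1))} ∧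
      span ℤ (Set.range (b ∘ Sum.inl)) = LinearMap.ker (restrictPairing G E) ∧
      bZ G (b (.inr 0)) (b (.inl (.inl 0))) = δ ∧ bZ G (b (.inr 0)) (b (.inl (.inl 1))) = 0 ∧
      bZ G (b (.inr 1)) (b (.inl (.inl 0))) = 0 ∧
      bZ G (b (.inr 1)) (b (.inl (.inl 1))) = δ * k := by
  obtain ⟨e, δ, k, hδ, hk, hH⟩ :=
    exists_basis_eq_span_smul_coord hrank (dualCoannihilator_range_restrictPairing hdet E)
  obtain ⟨u, hu⟩ : δ • e.coord 0 ∈ LinearMap.range (restrictPairing G E) :=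
    hH ▸ subset_span (by simp)
  obtain ⟨v, hv⟩ : (δ * k) • e.coord 1 ∈ LinearMap.range (restrictPairing G E) :=
    hH ▸ subset_span (by simp)
  have hEK : E ≤ LinearMap.ker (restrictPairing G E) := fun x hx =>
    mem_ker_restrictPairing.2 (hiso x hx)
  have := isTorsionFree_quotient hprim
  obtain ⟨m, bK, hbK⟩ := exists_basis_extend_of_le hEK e
  have huv : restrictPairing G E ∘ ![u, v] = ![δ • e.coord 0, (δ * k) • e.coord 1] := by
    ext i : 1
    fin_cases i <;> simp [hu, hv]
  obtain ⟨b, hb⟩ := exists_basis_sum_elim_of_ker (bK.linearIndependent.map' _ (ker_subtype _))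
    bK.span_range_subtype_comp (huv ▸ e.linearIndependent_smul_coord hδ.ne' (by positivity))
    (by rw [huv, Matrix.range_cons_cons_empty, hH])
  have hb₀ : ∀ i, b (.inl (.inl i)) = e i := fun i => by simp [hb, hbK]
  refine ⟨m, b, δ, k, hδ, hk, ?_, ?_, ?_⟩
  · rw [hb₀, hb₀]
    conv_lhs => rw [← e.span_range_subtype_comp, Set.range_fin_two]
    rfl
  · rw [hb, Sum.elim_comp_inl, bK.span_range_subtype_comp]
  · simp [hb₀, hb, ← restrictPairing_apply, hu, hv]

/-- **Lemma (special_basis_for_L).** Let `L` be a lattice of signature `(2,n)` and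
`E ⊂ L` a primitive totally isotropic sublattice of rank `2`, with orthogonal
complement `E^⊥`.  There is a `ℤ`-basis `e'_1,…,e'_{n+2}` of `L` and positive
integers `δ`, `e` such that `e'_1,e'_2` is a basis of `E`, `e'_1,…,e'_n` is a basis
of `E^⊥`, and the Gram matrix has block form `[[0,0,A],[0,B,C],[Aᵀ,Cᵀ,D]]` with
`A = diag(δ, δe)`. -/
theorem stmt_7 (n : ℕ) (G : Matrix (Fin (n + 2)) (Fin (n + 2)) ℤ)
    (hsym : G.IsSymm) (hdet : G.det ≠ 0)
    (E : Submodule ℤ (Fin (n + 2) → ℤ))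
    (hprim : ∀ (x : Fin (n + 2) → ℤ) (c : ℤ), c ≠ 0 → c • x ∈ E → x ∈ E)
    (hrank : Module.finrank ℤ ↥E = 2)
    (hisotropic : ∀ x ∈ E, ∀ y ∈ E, bZ G x y = 0) :
    ∃ (e' : Module.Basis (Fin (n + 2)) ℤ (Fin (n + 2) → ℤ)) (δ e : ℤ),
      0 < δ ∧ 0 < e ∧
      -- `e'_1, e'_2` is a `ℤ`-basis of `E`
      E = Submodule.span ℤ {e' 0, e' 1} ∧
      -- `e'_1, …, e'_n` is a `ℤ`-basis of `E^⊥`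
      (∀ x : Fin (n + 2) → ℤ,
        (∀ y ∈ E, bZ G x y = 0) ↔
          x ∈ Submodule.span ℤ (e' '' {i : Fin (n + 2) | (i : ℕ) < n})) ∧
      -- the two top-left blocks of the Gram matrix vanish
      (∀ i j : Fin (n + 2), (i : ℕ) < 2 → (j : ℕ) < n → bZ G (e' i) (e' j) = 0) ∧
      -- the block `A` is `diag(δ, δe)`
      bZ G (e' 0) (e' ⟨n, by omega⟩) = δ ∧
      bZ G (e' 0) (e' ⟨n + 1, by omega⟩) = 0 ∧
      bZ G (e' 1) (e' ⟨n, by omega⟩) = 0 ∧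
      bZ G (e' 1) (e' ⟨n + 1, by omega⟩) = δ * e := by
  obtain ⟨m, b, δ, k, hδ, hk, hE, hperp, h₀₀, h₀₁, h₁₀, h₁₁⟩ :=
    exists_adapted_basis hdet hprim hrank hisotropic
  have hm : 2 + m = n := by
    have := (finrank_eq_card_basis b).symm.trans (finrank_eq_card_basis (Pi.basisFun ℤ _))
    simp at this
    omega
  obtain ⟨e', he₀, he₁, heₙ, heₙ₁, himg⟩ := b.exists_reindex_fin_blocks hm
  have hperp' (x : Fin (n + 2) → ℤ) :
      (∀ y ∈ E, bZ G x y = 0) ↔ x ∈ span ℤ (e' '' {i : Fin (n + 2) | (i : ℕ) < n}) := by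
    rw [himg, hperp, mem_ker_restrictPairing]
  refine ⟨e', δ, k, hδ, hk, by rw [he₀, he₁, hE], hperp', fun i j hi hj => ?_,
    by rw [he₀, heₙ, bZ_comm hsym, h₀₀], by rw [he₀, heₙ₁, bZ_comm hsym, h₁₀],
    by rw [he₁, heₙ, bZ_comm hsym, h₀₁], by rw [he₁, heₙ₁, bZ_comm hsym, h₁₁]⟩
  have hiE : e' i ∈ E := by
    rw [hE, ← he₀, ← he₁]
    rcases (by omega : (i : ℕ) = 0 ∨ (i : ℕ) = 1) with h | h
    · exact subset_span (Or.inl (congrArg e' (Fin.ext (by simp [h]))))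
    · exact subset_span (Or.inr (congrArg e' (Fin.ext (by simp [h]))))
  rw [bZ_comm hsym]
  exact (hperp' _).2 (subset_span ⟨j, hj, rfl⟩) _ hiE

end A0607339
end

section
/- Let M be an even unimodular lattice, let T ⊆ M be a primitive nondegenerate sublattice and let S = {x ∈ M : (x,t) = 0 for all t ∈ T} be its orthogonal complement. Suppose there is an isometry σ of M with σ(t) = t for all t ∈ T and σ(s) = −s for all s ∈ S. Then the discriminant groups A_T and A_S are 2-elementary, i.e. 2·A_T = 0 and 2·A_S = 0. -/
/-! Let `N` be `T` or `S` and let `τ` be `σ` or `-σ` accordingly, so that `τ` is the identity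
on `N` and `-1` on the orthogonal complement of `N`. For `N = S` this needs `S ∩ S^⊥ = 0`: since
`m - σ m ∈ S` for every `m`, a vector of `S ∩ S^⊥` is orthogonal to all of `M`, hence zero by
unimodularity. Now take `x ∈ N^∨`. As `N` is a direct summand of `M` and `M` is unimodular,
there is `m ∈ M` with `(m, n) = (x, n)` for all `n ∈ N`, i.e. `m = x + w` with `w ∈ N^⊥ ⊗ ℚ`.
Then `τ m = x - w`, so `2x = m + τ m ∈ N`. -/

namespace A0607339

/-- Extension of scalars `ℤ → ℚ` for integer vectors. -/
def toQ (ι : Type) [Fintype ι] : (ι → ℤ) →ₗ[ℤ] (ι → ℚ) where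
  toFun v i := (v i : ℚ)
  map_add' u v := by funext i; simp
  map_smul' c v := by funext i; simp

/-- The `ℚ`-bilinear extension of the form attached to a Gram matrix `G`. -/
def bQ {ι : Type} [Fintype ι] (G : Matrix ι ι ℤ) (x y : ι → ℚ) : ℚ :=
  dotProduct x (Matrix.mulVec (G.map (Int.cast : ℤ → ℚ)) y)

/-- The orthogonal complement in `L` of a subset `S ⊆ L`. -/
def orthoZ {ι : Type} [Fintype ι] (G : Matrix ι ι ℤ) (S : Set (ι → ℤ)) :
    Submodule ℤ (ι → ℤ) where
  carrier := {x | ∀ s ∈ S, bZ G x s = 0}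
  zero_mem' := by
    intro s hs
    exact zero_dotProduct _
  add_mem' := by
    intro a b ha hb s hs
    have h : bZ G (a + b) s = bZ G a s + bZ G b s := add_dotProduct a b _
    rw [h, ha s hs, hb s hs, add_zero]
  smul_mem' := by
    intro c a ha s hs
    have h : bZ G (c • a) s = c • bZ G a s := smul_dotProduct c a _
    rw [h, ha s hs, smul_zero]

/-- The statement that the discriminant group of a primitive nondegenerate sublattice
`N` of `L` is 2-elementary: twice any element of the dual `N^∨ ⊆ N⊗ℚ` lies in `N`. -/
def DiscIsTwoElementary {ι : Type} [Fintype ι] (G : Matrix ι ι ℤ)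
    (N : Submodule ℤ (ι → ℤ)) : Prop :=
  ∀ x : ι → ℚ, x ∈ Submodule.span ℚ (⇑(toQ ι) '' (N : Set (ι → ℤ))) →
    (∀ t ∈ N, ∃ k : ℤ, bQ G x (toQ ι t) = (k : ℚ)) →
    (2 : ℤ) • x ∈ ⇑(toQ ι) '' (N : Set (ι → ℤ))

section Lattice

variable {ι : Type} [Fintype ι]

lemma toQ_zsmul (c : ℤ) (v : ι → ℤ) : toQ ι (c • v) = (c : ℚ) • toQ ι v := by
  funext i
  simp [toQ]

lemma bZ_smul_left (G : Matrix ι ι ℤ) (c : ℤ) (x y : ι → ℤ) :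
    bZ G (c • x) y = c * bZ G x y :=
  smul_dotProduct c x _

lemma bZ_sub_left (G : Matrix ι ι ℤ) (x y z : ι → ℤ) :
    bZ G (x - y) z = bZ G x z - bZ G y z := by
  simp [bZ, sub_dotProduct]

lemma bZ_sub_right (G : Matrix ι ι ℤ) (x y z : ι → ℤ) :
    bZ G x (y - z) = bZ G x y - bZ G x z := by
  simp [bZ, Matrix.mulVec_sub, dotProduct_sub]

lemma bZ_neg_left (G : Matrix ι ι ℤ) (x y : ι → ℤ) : bZ G (-x) y = -bZ G x y := by
  simp [bZ]

lemma bZ_neg_right (G : Matrix ι ι ℤ) (x y : ι → ℤ) : bZ G x (-y) = -bZ G x y := by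
  simp [bZ, Matrix.mulVec_neg]

lemma bQ_toQ (G : Matrix ι ι ℤ) (u v : ι → ℤ) :
    bQ G (toQ ι u) (toQ ι v) = bZ G u v := by
  simp [bQ, bZ, toQ, dotProduct, Matrix.mulVec]

lemma bQ_sub_left (G : Matrix ι ι ℤ) (x y z : ι → ℚ) :
    bQ G (x - y) z = bQ G x z - bQ G y z := by
  simp [bQ, sub_dotProduct]

lemma bQ_smul_left (G : Matrix ι ι ℤ) (q : ℚ) (x z : ι → ℚ) :
    bQ G (q • x) z = q * bQ G x z := by
  simp [bQ, smul_dotProduct]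

lemma mem_orthoZ_of_smul_mem (G : Matrix ι ι ℤ) (X : Set (ι → ℤ)) {x : ι → ℤ} {c : ℤ}
    (hc : c ≠ 0) (hx : c • x ∈ orthoZ G X) : x ∈ orthoZ G X := fun s hs => by
  have := hx s hs
  rwa [bZ_smul_left, mul_eq_zero, or_iff_right hc] at this

lemma exists_int_smul_eq_toQ_of_mem_span (N : Submodule ℤ (ι → ℤ)) {x : ι → ℚ}
    (hx : x ∈ Submodule.span ℚ (toQ ι '' N)) :
    ∃ c : ℤ, c ≠ 0 ∧ ∃ n ∈ N, (c : ℚ) • x = toQ ι n := by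
  obtain ⟨y, hy, c, rfl⟩ := (IsLocalization.mem_span_iff (nonZeroDivisors ℤ)).1 hx
  rw [Submodule.span_image, Submodule.span_eq] at hy
  obtain ⟨n, hn, rfl⟩ := hy
  refine ⟨c, nonZeroDivisors.coe_ne_zero c, n, hn, ?_⟩
  rw [smul_smul, ← eq_intCast (algebraMap ℤ ℚ), IsLocalization.mk'_spec', map_one, one_smul]

lemma exists_bZ_eq_of_isUnit_det [DecidableEq ι] {G : Matrix ι ι ℤ} (hG : IsUnit G.det)
    (φ : (ι → ℤ) →ₗ[ℤ] ℤ) : ∃ m, ∀ v, bZ G m v = φ v := by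
  obtain ⟨m, hm⟩ : ∃ m, Matrix.vecMul m G = fun i => φ (Pi.single i 1) :=
    Matrix.vecMul_surjective_iff_isUnit.2 ((Matrix.isUnit_iff_isUnit_det G).2 hG) _
  refine ⟨m, fun v => ?_⟩
  rw [bZ, Matrix.dotProduct_mulVec, hm, LinearMap.pi_apply_eq_sum_univ φ v]
  simp only [dotProduct, smul_eq_mul, mul_comm]
  congr! with i j
  simp [Pi.single_apply, eq_comm]

lemma eq_zero_of_forall_bZ_eq_zero [DecidableEq ι] {G : Matrix ι ι ℤ} (hG : IsUnit G.det)
    {u : ι → ℤ} (hu : ∀ v, bZ G u v = 0) : u = 0 := by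
  have : Matrix.vecMul u G = 0 := dotProduct_eq_zero_iff.1 fun v => by
    rw [← Matrix.dotProduct_mulVec]; exact hu v
  simpa [Matrix.vecMul_vecMul, Matrix.mul_nonsing_inv _ hG] using congrArg (Matrix.vecMul · G⁻¹) this

end Lattice

section Primitive

variable {R M : Type*} [CommRing R] [IsDomain R] [IsPrincipalIdealRing R] [AddCommGroup M]
  [Module R M] [Module.Finite R M]

theorem exists_retraction_of_smul_mem (N : Submodule R M)
    (hN : ∀ (x : M) (c : R), c ≠ 0 → c • x ∈ N → x ∈ N) :
    ∃ ρ : M →ₗ[R] N, ∀ n : N, ρ n = n := by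
  have : Module.IsTorsionFree R (M ⧸ N) := .of_smul_eq_zero fun c q hcq => by
    obtain ⟨x, rfl⟩ := N.mkQ_surjective q
    rw [← map_smul, Submodule.mkQ_apply, Submodule.Quotient.mk_eq_zero] at hcq
    rw [Submodule.mkQ_apply, Submodule.Quotient.mk_eq_zero]
    exact (eq_or_ne c 0).imp_right fun hc => hN x c hc hcq
  obtain ⟨s, hs⟩ := N.mkQ.exists_rightInverse_of_surjective N.range_mkQ
  have hproj (x : M) : x - s (N.mkQ x) ∈ N := by
    rw [← Submodule.Quotient.mk_eq_zero, Submodule.Quotient.mk_sub, sub_eq_zero]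
    exact (LinearMap.congr_fun hs _).symm
  refine ⟨(LinearMap.id - s ∘ₗ N.mkQ).codRestrict N hproj, fun n => Subtype.ext ?_⟩
  simp [(Submodule.Quotient.mk_eq_zero N).2 n.2]

end Primitive

section Discriminant

variable {ι : Type} [Fintype ι] [DecidableEq ι] {G : Matrix ι ι ℤ}

lemma exists_bZ_eq_of_forall_bQ_isInt (hG : IsUnit G.det) (N : Submodule ℤ (ι → ℤ))
    (hN : ∀ (x : ι → ℤ) (c : ℤ), c ≠ 0 → c • x ∈ N → x ∈ N) (x : ι → ℚ)
    (hx : ∀ n ∈ N, ∃ k : ℤ, bQ G x (toQ ι n) = k) :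
    ∃ m, ∀ n ∈ N, (bZ G m n : ℚ) = bQ G x (toQ ι n) := by
  obtain ⟨ρ, hρ⟩ := exists_retraction_of_smul_mem N hN
  let f : (ι → ℤ) →ₗ[ℤ] ℚ :=
    (Matrix.toLinearMap₂' ℚ (G.map (Int.cast : ℤ → ℚ)) x).restrictScalars ℤ ∘ₗ toQ ι
  have hf (v : ι → ℤ) : f v = bQ G x (toQ ι v) := Matrix.toLinearMap₂'_apply' _ _ _
  have hfN (n : N) : f n ∈ LinearMap.range (Algebra.linearMap ℤ ℚ) := by
    obtain ⟨k, hk⟩ := hx n n.2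
    exact ⟨k, by simp [hf, hk]⟩
  let g : N →ₗ[ℤ] ℤ := LinearMap.codRestrictOfInjective (f ∘ₗ N.subtype)
    (Algebra.linearMap ℤ ℚ) Int.cast_injective hfN
  obtain ⟨m, hm⟩ := exists_bZ_eq_of_isUnit_det hG (g ∘ₗ ρ)
  refine ⟨m, fun n hn => ?_⟩
  rw [hm, LinearMap.comp_apply, ← hf, show ρ n = ⟨n, hn⟩ from hρ ⟨n, hn⟩]
  exact LinearMap.codRestrictOfInjective_comp_apply (f ∘ₗ N.subtype) _ _ hfN _

theorem discIsTwoElementary_of_eq_self_of_eq_neg (hG : IsUnit G.det) (N : Submodule ℤ (ι → ℤ))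
    (hN : ∀ (x : ι → ℤ) (c : ℤ), c ≠ 0 → c • x ∈ N → x ∈ N) (τ : (ι → ℤ) →ₗ[ℤ] (ι → ℤ))
    (hτN : ∀ n ∈ N, τ n = n) (hτ_orth : ∀ w ∈ orthoZ G N, τ w = -w) :
    DiscIsTwoElementary G N := by
  intro x hx hint
  obtain ⟨m, hm⟩ := exists_bZ_eq_of_forall_bQ_isInt hG N hN x hint
  obtain ⟨c, hc, n₀, hn₀, hcx⟩ := exists_int_smul_eq_toQ_of_mem_span N hx
  -- `c • m - n₀` is `c • (m - x)`, and `m - x` is orthogonal to `N`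
  have hw : c • m - n₀ ∈ orthoZ G N := fun n hn => by
    have : (bZ G (c • m - n₀) n : ℚ) = 0 := by
      rw [← bQ_toQ, map_sub, toQ_zsmul, ← hcx, ← smul_sub, bQ_smul_left, bQ_sub_left, bQ_toQ,
        hm n hn, sub_self, mul_zero]
    exact_mod_cast this
  have hsum : c • (m + τ m) = (2 : ℤ) • n₀ := by
    have := hτ_orth _ hw
    rw [map_sub, map_zsmul, hτN n₀ hn₀, sub_eq_iff_eq_add] at this
    rw [smul_add, this]
    abel
  refine ⟨m + τ m, hN _ c hc (hsum ▸ N.smul_mem 2 hn₀), ?_⟩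
  apply smul_right_injective (ι → ℚ) (Int.cast_ne_zero.2 hc : (c : ℚ) ≠ 0)
  show (c : ℚ) • toQ ι (m + τ m) = (c : ℚ) • ((2 : ℤ) • x)
  rw [← toQ_zsmul, hsum, map_zsmul, ← hcx, smul_comm]

end Discriminant

section Involution

variable {ι : Type} [Fintype ι] {G : Matrix ι ι ℤ} {T : Set (ι → ℤ)}
  {σ : (ι → ℤ) →ₗ[ℤ] (ι → ℤ)}

lemma sub_map_mem_orthoZ (hσ : ∀ x y, bZ G (σ x) (σ y) = bZ G x y) (hσT : ∀ t ∈ T, σ t = t)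
    (m : ι → ℤ) : m - σ m ∈ orthoZ G T := fun t ht => by
  have := hσ m t
  rw [hσT t ht] at this
  rw [bZ_sub_left, this, sub_self]

lemma bZ_map_left_of_mem_orthoZ (hσ : ∀ x y, bZ G (σ x) (σ y) = bZ G x y)
    (hσS : ∀ s ∈ orthoZ G T, σ s = -s) (m : ι → ℤ) {s : ι → ℤ} (hs : s ∈ orthoZ G T) :
    bZ G (σ m) s = -bZ G m s := by
  have := hσ m s
  rw [hσS s hs, bZ_neg_right] at this
  rw [← this, neg_neg]

lemma bZ_map_right_of_mem_orthoZ (hσ : ∀ x y, bZ G (σ x) (σ y) = bZ G x y)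
    (hσS : ∀ s ∈ orthoZ G T, σ s = -s) (m : ι → ℤ) {s : ι → ℤ} (hs : s ∈ orthoZ G T) :
    bZ G s (σ m) = -bZ G s m := by
  have := hσ s m
  rw [hσS s hs, bZ_neg_left] at this
  rw [← this, neg_neg]

lemma eq_zero_of_mem_orthoZ_of_forall_bZ_eq_zero [DecidableEq ι] (hG : IsUnit G.det)
    (hσ : ∀ x y, bZ G (σ x) (σ y) = bZ G x y) (hσT : ∀ t ∈ T, σ t = t)
    (hσS : ∀ s ∈ orthoZ G T, σ s = -s) {s : ι → ℤ} (hs : s ∈ orthoZ G T)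
    (hsS : ∀ s' ∈ orthoZ G T, bZ G s s' = 0) : s = 0 := by
  refine eq_zero_of_forall_bZ_eq_zero hG fun v => ?_
  have := hsS _ (sub_map_mem_orthoZ hσ hσT v)
  rw [bZ_sub_right, bZ_map_right_of_mem_orthoZ hσ hσS v hs] at this
  linarith

lemma map_eq_self_of_mem_orthoZ_orthoZ [DecidableEq ι] (hG : IsUnit G.det)
    (hσ : ∀ x y, bZ G (σ x) (σ y) = bZ G x y) (hσT : ∀ t ∈ T, σ t = t)
    (hσS : ∀ s ∈ orthoZ G T, σ s = -s) {w : ι → ℤ} (hw : w ∈ orthoZ G (orthoZ G T)) :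
    σ w = w := by
  refine (sub_eq_zero.1 (eq_zero_of_mem_orthoZ_of_forall_bZ_eq_zero hG hσ hσT hσS
    (sub_map_mem_orthoZ hσ hσT w) fun s hs => ?_)).symm
  rw [bZ_sub_left, bZ_map_left_of_mem_orthoZ hσ hσS w hs, hw s hs, neg_zero, sub_zero]

end Involution

theorem stmt_13_general (ι : Type) [Fintype ι] [DecidableEq ι] (G : Matrix ι ι ℤ)
    (hunimod : G.det = 1 ∨ G.det = -1)
    (T : Submodule ℤ (ι → ℤ))
    (hprim : ∀ (x : ι → ℤ) (c : ℤ), c ≠ 0 → c • x ∈ T → x ∈ T)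
    (σ : (ι → ℤ) ≃ₗ[ℤ] (ι → ℤ))
    (hσiso : ∀ x y, bZ G (σ x) (σ y) = bZ G x y)
    (hσT : ∀ t ∈ T, σ t = t)
    (hσS : ∀ s ∈ orthoZ G (T : Set (ι → ℤ)), σ s = -s) :
    DiscIsTwoElementary G T ∧ DiscIsTwoElementary G (orthoZ G (T : Set (ι → ℤ))) := by
  have hG : IsUnit G.det := by rcases hunimod with h | h <;> simp [h]
  refine ⟨discIsTwoElementary_of_eq_self_of_eq_neg hG T hprim σ hσT hσS,
    discIsTwoElementary_of_eq_self_of_eq_neg hG _ (fun _ _ hc => mem_orthoZ_of_smul_mem G _ hc)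
      (-σ) (fun s hs => by simp [hσS s hs]) fun w hw => ?_⟩
  rw [LinearMap.neg_apply, neg_inj]
  exact map_eq_self_of_mem_orthoZ_orthoZ hG hσiso hσT hσS hw

/-- **Lemma 4.5 (2-elementary).** Let `T` be a primitive nondegenerate sublattice of an
even unimodular lattice `M`, with orthogonal complement `S`.  If there is an
involution `σ ∈ O(M)` with `σ|_T = id` and `σ|_S = −id`, then `A_T` and `A_S` are
2-elementary. -/
theorem stmt_13 (ι : Type) [Fintype ι] [DecidableEq ι] (G : Matrix ι ι ℤ)
    (hsym : G.IsSymm) (heven : ∀ x : ι → ℤ, Even (bZ G x x))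
    (hunimod : G.det = 1 ∨ G.det = -1)
    (T : Submodule ℤ (ι → ℤ))
    (hprim : ∀ (x : ι → ℤ) (c : ℤ), c ≠ 0 → c • x ∈ T → x ∈ T)
    (hnondeg : ∀ t ∈ T, (∀ t' ∈ T, bZ G t t' = 0) → t = 0)
    (σ : (ι → ℤ) ≃ₗ[ℤ] (ι → ℤ))
    (hσiso : ∀ x y, bZ G (σ x) (σ y) = bZ G x y)
    (hσT : ∀ t ∈ T, σ t = t)
    (hσS : ∀ s ∈ orthoZ G (T : Set (ι → ℤ)), σ s = -s) :
    DiscIsTwoElementary G T ∧ DiscIsTwoElementary G (orthoZ G (T : Set (ι → ℤ))) :=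
  stmt_13_general ι G hunimod T hprim σ hσiso hσT hσS

end A0607339
end
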